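/- arXiv:1608.04838 — 8 statements merged into one kernel-verified Lean document; each statement's English description precedes it below -/
import Mathlib

section
/- Let n, k, r be integers with n ≥ kr + (k-1), k ≥ 1, r ≥ 0. Let H be a k-partite k-uniform hypergraph with partition classes V_1, ..., V_k each of size n. If every legal (k-1)-set of vertices (a set meeting each partition class in at most one vertex) has degree at least r, then H contains a matching of size at least kr. -/
/-- In a k-partite k-graph with classes of size n ≥ kr + (k-1), if every
legal (k-1)-set has degree at least r, then there is a matching of size at least kr. -/
theorem stmt0 {α : Type*} [Fintype α] [DecidableEq α]
    (k n r : ℕ) (hk : 1 ≤ k) (hn : k * r + (k - 1) ≤ n)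
    (P : Fin k → Finset α)
    (hP : ∀ v : α, ∃! i, v ∈ P i)
    (hPcard : ∀ i, (P i).card = n)
    (E : Finset (Finset α))
    (hE : ∀ e ∈ E, ∀ i, (e ∩ P i).card = 1)
    (hdeg : ∀ S : Finset α, S.card = k - 1 → (∀ i, (S ∩ P i).card ≤ 1) →
      r ≤ (Finset.univ.filter (fun v => insert v S ∈ E)).card) :
    ∃ M ⊆ E, (∀ e ∈ M, ∀ f ∈ M, e ≠ f → Disjoint e f) ∧ k * r ≤ M.card := by
  classical
  have huniq : ∀ {v : α} {i j : Fin k}, v ∈ P i → v ∈ P j → i = j := by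
    intro v i j hi hj
    obtain ⟨i₀, _, hu⟩ := hP v
    rw [hu i hi, hu j hj]
  have hcardpart : ∀ s : Finset α, s.card = ∑ i, (s ∩ P i).card := by
    intro s
    have h1 : ∀ i, (s ∩ P i).card = ∑ v ∈ s, if v ∈ P i then 1 else 0 := by
      intro i
      rw [← Finset.filter_mem_eq_inter, Finset.card_filter]
    simp_rw [h1]
    rw [Finset.sum_comm, Finset.card_eq_sum_ones]
    refine Finset.sum_congr rfl fun v hv => ?_
    obtain ⟨i₀, hi₀, hu⟩ := hP v
    rw [Finset.sum_eq_single i₀]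
    · simp [hi₀]
    · intro j _ hj
      simp only [ite_eq_right_iff]
      intro hvj; exact absurd (hu j hvj) hj
    · simp
  have hek : ∀ e ∈ E, e.card = k := by
    intro e he
    rw [hcardpart e]
    simp [hE e he]
  suffices hmain : ∀ m : ℕ, m ≤ k * r →
      ∃ M, M ⊆ E ∧ (∀ e ∈ M, ∀ f ∈ M, e ≠ f → Disjoint e f) ∧ M.card = m by
    obtain ⟨M, h1, h2, h3⟩ := hmain (k * r) le_rfl
    exact ⟨M, h1, h2, h3.ge⟩
  intro m
  induction m with
  | zero => exact fun _ => ⟨∅, by simp, by simp, rfl⟩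
  | succ m ih =>
    intro hm
    obtain ⟨M, hME, hMd, hMc⟩ := ih (by omega)
    set C : Finset α := M.biUnion id with hC
    have hgC : ∀ g ∈ M, g ⊆ C := fun g hg a ha => Finset.mem_biUnion.2 ⟨g, hg, ha⟩
    have hCP : ∀ i, (C ∩ P i).card = m := by
      intro i
      have hb : C ∩ P i = M.biUnion (fun e => e ∩ P i) := by
        ext a
        simp only [hC, Finset.mem_inter, Finset.mem_biUnion, id]
        tauto
      rw [hb, Finset.card_biUnion]
      · rw [← hMc, Finset.card_eq_sum_ones]
        exact Finset.sum_congr rfl fun e he => hE e (hME he) i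
      · intro e he f hf hef
        exact Finset.disjoint_of_subset_left Finset.inter_subset_left
          (Finset.disjoint_of_subset_right Finset.inter_subset_left (hMd e he f hf hef))
    have hfreecard : ∀ i, k ≤ (P i \ C).card := by
      intro i
      have h1 : P i \ C = P i \ (C ∩ P i) := by
        ext a
        simp only [Finset.mem_sdiff, Finset.mem_inter]
        tauto
      rw [h1, Finset.card_sdiff_of_subset Finset.inter_subset_right, hPcard, hCP]
      omega
    have hQex : ∀ j : Fin k, ∃ t ⊆ P j \ C, t.card = k :=
      fun j => Finset.exists_subset_card_eq (hfreecard j)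
    choose Q hQsub hQcard using hQex
    set x : Fin k → Fin k → α :=
      fun j i => ((Q j).equivFin.symm (Fin.cast (hQcard j).symm i) : α) with hx
    have hxQ : ∀ j i, x j i ∈ Q j := fun j i => ((Q j).equivFin.symm _).prop
    have hxP : ∀ j i, x j i ∈ P j := fun j i => (Finset.mem_sdiff.1 (hQsub j (hxQ j i))).1
    have hxC : ∀ j i, x j i ∉ C := fun j i => (Finset.mem_sdiff.1 (hQsub j (hxQ j i))).2
    have hxinj : ∀ j : Fin k, Function.Injective (x j) := by
      intro j i i' h
      have h1 := (Q j).equivFin.symm.injective (Subtype.coe_injective h)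
      exact Fin.ext (by simpa using congrArg Fin.val h1)
    have hxclass : ∀ {j j' i i'}, x j i = x j' i' → j = j' := by
      intro j j' i i' h
      refine huniq (hxP j i) ?_
      rw [h]; exact hxP j' i'
    set S : Fin k → Finset α := fun i => (Finset.univ.erase i).image (fun j => x j i) with hS
    have hSmem : ∀ {i a}, a ∈ S i ↔ ∃ j, j ≠ i ∧ x j i = a := by
      intro i a
      simp [hS]
    have hScard : ∀ i, (S i).card = k - 1 := by
      intro i
      rw [hS]
      simp only
      rw [Finset.card_image_of_injOn (fun j _ j' _ h => hxclass h)]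
      rw [Finset.card_erase_of_mem (Finset.mem_univ i), Finset.card_univ, Fintype.card_fin]
    have hSP : ∀ i j, S i ∩ P j ⊆ {x j i} := by
      intro i j a ha
      obtain ⟨haS, haP⟩ := Finset.mem_inter.1 ha
      obtain ⟨j', hj', rfl⟩ := hSmem.1 haS
      have : j' = j := huniq (hxP j' i) haP
      subst this; exact Finset.mem_singleton_self _
    have hSlegal : ∀ i j, (S i ∩ P j).card ≤ 1 := fun i j =>
      le_trans (Finset.card_le_card (hSP i j)) (by simp)
    have hSPi : ∀ i a, a ∈ S i → a ∉ P i := by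
      intro i a ha hai
      obtain ⟨j, hj, rfl⟩ := hSmem.1 ha
      exact hj (huniq (hxP j i) hai)
    have hSC : ∀ i a, a ∈ S i → a ∉ C := by
      intro i a ha
      obtain ⟨j, hj, rfl⟩ := hSmem.1 ha
      exact hxC j i
    have hSS : ∀ {i i'}, i ≠ i' → ∀ a, a ∈ S i → a ∉ S i' := by
      intro i i' hne a ha ha'
      obtain ⟨j, hj, h⟩ := hSmem.1 ha
      obtain ⟨j', hj', h'⟩ := hSmem.1 ha'
      rw [← h'] at h
      have hjj := hxclass h
      subst hjj
      exact hne (hxinj j h)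
    set D : Fin k → Finset α :=
      fun i => Finset.univ.filter (fun v => insert v (S i) ∈ E) with hD
    have hDdeg : ∀ i, r ≤ (D i).card := by
      intro i
      exact hdeg (S i) (hScard i) (fun j => hSlegal i j)
    have hDE : ∀ {i v}, v ∈ D i → insert v (S i) ∈ E := by
      intro i v hv
      exact (Finset.mem_filter.1 hv).2
    have hDP : ∀ {i v}, v ∈ D i → v ∈ P i := by
      intro i v hv
      have he := hDE hv
      have h1 := hE _ he i
      by_contra hvP
      have hSiP : S i ∩ P i = ∅ := by
        apply Finset.eq_empty_of_forall_notMem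
        intro a ha
        exact hSPi i a (Finset.mem_inter.1 ha).1 (Finset.mem_inter.1 ha).2
      rw [Finset.insert_inter_of_notMem hvP, hSiP] at h1
      simp at h1
    by_cases hfree : ∃ i, ∃ v ∈ D i, v ∉ C
    · obtain ⟨i, v, hvD, hvC⟩ := hfree
      have hnewfree : ∀ a ∈ insert v (S i), a ∉ C := by
        intro a ha
        rcases Finset.mem_insert.1 ha with rfl | h
        · exact hvC
        · exact hSC i a h
      have hdisj : ∀ g ∈ M, Disjoint (insert v (S i)) g := by
        intro g hg
        rw [Finset.disjoint_left]
        intro a ha hag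
        exact hnewfree a ha (hgC g hg hag)
      have hnot : insert v (S i) ∉ M := by
        intro hmem
        exact hvC (hgC _ hmem (Finset.mem_insert_self v (S i)))
      refine ⟨insert (insert v (S i)) M, ?_, ?_, ?_⟩
      · intro g hg
        rcases Finset.mem_insert.1 hg with rfl | hg'
        · exact hDE hvD
        · exact hME hg'
      · intro e he f hf hef
        rcases Finset.mem_insert.1 he with rfl | he' <;>
          rcases Finset.mem_insert.1 hf with rfl | hf'
        · exact absurd rfl hef
        · exact hdisj f hf'
        · exact (hdisj e he').symm
        · exact hMd e he' f hf' hef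
      · rw [Finset.card_insert_of_notMem hnot, hMc]
    · push_neg at hfree
      set T : Finset ((_ : Fin k) × α) := Finset.univ.sigma (fun i => D i) with hT
      have hTcard : k * r ≤ T.card := by
        rw [hT, Finset.card_sigma]
        calc k * r = ∑ _i : Fin k, r := by
              simp [Finset.sum_const, Finset.card_univ, mul_comm]
        _ ≤ ∑ i, (D i).card := Finset.sum_le_sum fun i _ => hDdeg i
      have hφex : ∀ p : (_ : Fin k) × α, p ∈ T → ∃ e, e ∈ M ∧ p.2 ∈ e := by
        intro p hp
        have hpD : p.2 ∈ D p.1 := (Finset.mem_sigma.1 hp).2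
        have hpc := hfree p.1 p.2 hpD
        obtain ⟨e, he, hpe⟩ := Finset.mem_biUnion.1 hpc
        exact ⟨e, he, hpe⟩
      set φ : ((_ : Fin k) × α) → Finset α :=
        fun p => if h : ∃ e, e ∈ M ∧ p.2 ∈ e then h.choose else ∅ with hφ
      have hφspec : ∀ p ∈ T, φ p ∈ M ∧ p.2 ∈ φ p := by
        intro p hp
        have h := hφex p hp
        simp only [hφ, dif_pos h]
        exact h.choose_spec
      have hMT : M.card < T.card := by omega
      obtain ⟨p, hp, q, hq, hpq, hpqφ⟩ :=
        Finset.exists_ne_map_eq_of_card_lt_of_maps_to hMT (fun p hp => (hφspec p hp).1)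
      obtain ⟨i, v⟩ := p
      obtain ⟨i', v'⟩ := q
      have hvD : v ∈ D i := (Finset.mem_sigma.1 hp).2
      have hv'D : v' ∈ D i' := (Finset.mem_sigma.1 hq).2
      set e₀ := φ ⟨i, v⟩ with he₀
      have he₀M : e₀ ∈ M := (hφspec _ hp).1
      have hve₀ : v ∈ e₀ := (hφspec _ hp).2
      have hv'e₀ : v' ∈ e₀ := by
        rw [hpqφ]
        exact (hφspec _ hq).2
      have hii' : i ≠ i' := by
        intro h; subst h
        have h1 : (e₀ ∩ P i).card = 1 := hE e₀ (hME he₀M) i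
        obtain ⟨a, ha⟩ := Finset.card_eq_one.1 h1
        have hva : v = a := by
          have hm1 : v ∈ e₀ ∩ P i := Finset.mem_inter.2 ⟨hve₀, hDP hvD⟩
          rw [ha] at hm1; exact Finset.mem_singleton.1 hm1
        have hv'a : v' = a := by
          have hm1 : v' ∈ e₀ ∩ P i := Finset.mem_inter.2 ⟨hv'e₀, hDP hv'D⟩
          rw [ha] at hm1; exact Finset.mem_singleton.1 hm1
        exact hpq (by rw [hva, hv'a])
      have hvv' : v ≠ v' := by
        intro h
        refine hii' (huniq (hDP hvD) ?_)
        rw [h]; exact hDP hv'D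
      set f₁ := insert v (S i) with hf₁
      set f₂ := insert v' (S i') with hf₂
      have hf₁E : f₁ ∈ E := hDE hvD
      have hf₂E : f₂ ∈ E := hDE hv'D
      have hvC : v ∈ C := hfree i v hvD
      have hv'C : v' ∈ C := hfree i' v' hv'D
      have h12 : Disjoint f₁ f₂ := by
        rw [Finset.disjoint_left]
        intro a ha ha'
        rcases Finset.mem_insert.1 ha with rfl | haS
        · rcases Finset.mem_insert.1 ha' with h | h
          · exact hvv' h
          · exact hSC i' a h hvC
        · rcases Finset.mem_insert.1 ha' with h | h
          · subst h
            exact hSC i a haS hv'C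
          · exact hSS hii' a haS h
      have hgdisj1 : ∀ g ∈ M, g ≠ e₀ → Disjoint f₁ g := by
        intro g hg hge
        have hgd : Disjoint g e₀ := hMd g hg e₀ he₀M hge
        rw [Finset.disjoint_left]
        intro a ha hag
        rcases Finset.mem_insert.1 ha with rfl | haS
        · exact (Finset.disjoint_left.1 hgd hag) hve₀
        · exact hSC i a haS (hgC g hg hag)
      have hgdisj2 : ∀ g ∈ M, g ≠ e₀ → Disjoint f₂ g := by
        intro g hg hge
        have hgd : Disjoint g e₀ := hMd g hg e₀ he₀M hge
        rw [Finset.disjoint_left]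
        intro a ha hag
        rcases Finset.mem_insert.1 ha with rfl | haS
        · exact (Finset.disjoint_left.1 hgd hag) hv'e₀
        · exact hSC i' a haS (hgC g hg hag)
      have hmem : ∀ c, c ∈ insert f₁ (insert f₂ (M.erase e₀)) →
          c = f₁ ∨ c = f₂ ∨ (c ∈ M ∧ c ≠ e₀) := by
        intro c hc
        rcases Finset.mem_insert.1 hc with h | hc'
        · exact Or.inl h
        rcases Finset.mem_insert.1 hc' with h | hc''
        · exact Or.inr (Or.inl h)
        · exact Or.inr (Or.inr ⟨Finset.mem_of_mem_erase hc'', Finset.ne_of_mem_erase hc''⟩)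
      refine ⟨insert f₁ (insert f₂ (M.erase e₀)), ?_, ?_, ?_⟩
      · intro g hg
        rcases hmem g hg with rfl | rfl | ⟨hgM, _⟩
        · exact hf₁E
        · exact hf₂E
        · exact hME hgM
      · intro a ha b hb hab
        rcases hmem a ha with rfl | rfl | ⟨haM, hae⟩ <;>
          rcases hmem b hb with rfl | rfl | ⟨hbM, hbe⟩
        · exact absurd rfl hab
        · exact h12
        · exact hgdisj1 b hbM hbe
        · exact h12.symm
        · exact absurd rfl hab
        · exact hgdisj2 b hbM hbe
        · exact (hgdisj1 a haM hae).symm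
        · exact (hgdisj2 a haM hae).symm
        · exact hMd a haM b hbM hab
      · have hf₂mem : f₂ ∉ M.erase e₀ := by
          intro h
          have h1 := hMd f₂ (Finset.mem_of_mem_erase h) e₀ he₀M (Finset.ne_of_mem_erase h)
          exact (Finset.disjoint_left.1 h1 (Finset.mem_insert_self v' (S i'))) hv'e₀
        have hf₁mem : f₁ ∉ insert f₂ (M.erase e₀) := by
          intro h
          rcases Finset.mem_insert.1 h with h1 | h1
          · have hv2 : v ∈ f₂ := h1 ▸ Finset.mem_insert_self v (S i)
            rcases Finset.mem_insert.1 hv2 with h2 | h2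
            · exact hvv' h2
            · exact hSC i' v h2 hvC
          · have hd := hMd f₁ (Finset.mem_of_mem_erase h1) e₀ he₀M (Finset.ne_of_mem_erase h1)
            exact (Finset.disjoint_left.1 hd (Finset.mem_insert_self v (S i))) hve₀
        rw [Finset.card_insert_of_notMem hf₁mem, Finset.card_insert_of_notMem hf₂mem,
          Finset.card_erase_of_mem he₀M, hMc]
        have hm0 : 0 < m := hMc ▸ Finset.card_pos.2 ⟨e₀, he₀M⟩
        omega
end

section
/- Let k ≥ 3 and let n be sufficiently large with n ≢ 1 (mod k). Define pairwise disjoint sets V_1,...,V_k each of size n, choose U_i ⊆ V_i with |U_i| = ⌊(n-1)/k⌋, and let H_0 be the k-partite k-graph whose edges are exactly the legal k-sets meeting ⋃_i U_i. Then every legal (k-1)-set has degree at least ⌊(n-1)/k⌋, but the maximum matching of H_0 has size at most k·⌊(n-1)/k⌋ < n - 1. -/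
/-!
A legal `(k-1)`-set misses exactly one class `V_i`, and adding any vertex of `U_i` to it gives an
edge of `H₀`, so its degree is at least `|U_i|`. Every edge of a matching contains its own vertex
of `⋃ U_i`, so a matching has at most `k ⌊(n-1)/k⌋` edges, and this is `< n - 1` because
`k ∤ n - 1`.
-/

open Finset

namespace Finset

theorem card_le_card_of_pairwise_disjoint_of_forall_meet {β : Type*} {M : Finset (Finset β)}
    {T : Finset β} (hmeet : ∀ e ∈ M, ∃ v ∈ e, v ∈ T)
    (hdisj : ∀ e ∈ M, ∀ f ∈ M, e ≠ f → Disjoint e f) : #M ≤ #T :=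
  card_le_card_of_forall_subsingleton (fun e v => v ∈ e)
    (fun e he => (hmeet e he).imp fun _ hv => ⟨hv.2, hv.1⟩)
    (fun _ _ _ ⟨he, hve⟩ _ ⟨hf, hvf⟩ => by
      by_contra hef
      exact disjoint_left.mp (hdisj _ he _ hf hef) hve hvf)

end Finset

section Partite

variable {ι α : Type*} [DecidableEq ι]

theorem card_filter_insert_eq_one [DecidableEq α] {S : Finset (ι × α)} {i₀ : ι}
    (hi₀ : S.filter (fun v => v.1 = i₀) = ∅)
    (hS : ∀ j ≠ i₀, #(S.filter (fun v => v.1 = j)) = 1) (x : α) (i : ι) :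
    #((insert (i₀, x) S).filter (fun v => v.1 = i)) = 1 := by
  rw [filter_insert]
  split_ifs with h
  · subst h
    rw [hi₀]
    rfl
  · exact hS i (Ne.symm h)

variable [Fintype ι]

theorem exists_unique_missing_class [Nonempty ι] {S : Finset (ι × α)}
    (hS : #S = Fintype.card ι - 1) (hleg : ∀ i, #(S.filter (fun v => v.1 = i)) ≤ 1) :
    ∃ i₀, S.filter (fun v => v.1 = i₀) = ∅ ∧ ∀ j ≠ i₀, #(S.filter (fun v => v.1 = j)) = 1 := by
  set missing := univ.filter (fun i => #(S.filter (fun v => v.1 = i)) = 0)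
  have hS_eq : #S = #(univ.filter (fun i => ¬ #(S.filter (fun v => v.1 = i)) = 0)) := by
    rw [card_eq_sum_card_fiberwise (fun x _ => mem_univ x.1), card_filter]
    exact sum_congr rfl fun i _ => by have := hleg i; split_ifs <;> omega
  have hmissing : #missing = 1 := by
    have hsplit : #missing + #(univ.filter (fun i => ¬ #(S.filter (fun v => v.1 = i)) = 0)) =
        Fintype.card ι := card_filter_add_card_filter_not _
    have hpos := Fintype.card_pos (α := ι)
    omega
  obtain ⟨i₀, hi₀⟩ := card_eq_one.mp hmissing
  have hmem : ∀ i, i ∈ missing ↔ i = i₀ := by simp [hi₀]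
  refine ⟨i₀, card_eq_zero.mp ?_, fun j hj => ?_⟩
  · simpa [missing] using (hmem i₀).mpr rfl
  · have hj' : #(S.filter (fun v => v.1 = j)) ≠ 0 := by simpa [missing] using (hmem j).not.mpr hj
    have := hleg j
    omega

variable [DecidableEq α]

theorem card_le_sum_card_of_pairwise_disjoint (U : ι → Finset α) {M : Finset (Finset (ι × α))}
    (hmeet : ∀ e ∈ M, ∃ v ∈ e, v.2 ∈ U v.1)
    (hdisj : ∀ e ∈ M, ∀ f ∈ M, e ≠ f → Disjoint e f) : #M ≤ ∑ i, #(U i) :=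
  calc #M ≤ #(univ.biUnion fun i => (U i).map (Function.Embedding.sectR i α)) :=
        card_le_card_of_pairwise_disjoint_of_forall_meet
          (fun e he => (hmeet e he).imp fun v hv =>
            ⟨hv.1, mem_biUnion.mpr ⟨v.1, mem_univ _, mem_map.mpr ⟨v.2, hv.2, rfl⟩⟩⟩)
          hdisj
    _ ≤ ∑ i, #((U i).map (Function.Embedding.sectR i α)) := card_biUnion_le
    _ = ∑ i, #(U i) := by simp only [card_map]

variable [Fintype α]

theorem exists_card_le_degree [Nonempty ι] (U : ι → Finset α) {E : Finset (Finset (ι × α))}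
    (hE : ∀ e, ((∀ i, #(e.filter (fun v => v.1 = i)) = 1) ∧ ∃ v ∈ e, v.2 ∈ U v.1) → e ∈ E)
    {S : Finset (ι × α)} (hS : #S = Fintype.card ι - 1)
    (hleg : ∀ i, #(S.filter (fun v => v.1 = i)) ≤ 1) :
    ∃ i, #(U i) ≤ #(univ.filter (fun v => insert v S ∈ E)) := by
  obtain ⟨i₀, hi₀, hS₁⟩ := exists_unique_missing_class hS hleg
  refine ⟨i₀, ?_⟩
  calc #(U i₀) = #((U i₀).map (Function.Embedding.sectR i₀ α)) := (card_map _).symm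
    _ ≤ _ := card_le_card fun v hv => by
      obtain ⟨x, hx, rfl⟩ := mem_map.mp hv
      exact mem_filter.mpr ⟨mem_univ _,
        hE _ ⟨card_filter_insert_eq_one hi₀ hS₁ x, _, mem_insert_self _ _, hx⟩⟩

end Partite

theorem Nat.mul_div_pred_lt_pred {k n : ℕ} (hk : 2 ≤ k) (hn : 1 ≤ n) (hmod : n % k ≠ 1) :
    k * ((n - 1) / k) < n - 1 := by
  refine lt_of_le_of_ne (Nat.mul_div_le (n - 1) k) fun h => hmod ?_
  have hn_eq : n = 1 + k * ((n - 1) / k) := by omega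
  rw [hn_eq, Nat.add_mul_mod_self_left, Nat.mod_eq_of_lt (by omega)]

/-- The extremal example H₀: for k ≥ 3 and large n with n ≢ 1 (mod k),
taking U_i ⊆ V_i of size ⌊(n-1)/k⌋ and edges the legal k-sets meeting ⋃ U_i,
every legal (k-1)-set has degree ≥ ⌊(n-1)/k⌋ but ν(H₀) ≤ k⌊(n-1)/k⌋ < n - 1. -/
theorem stmt1 (k : ℕ) (hk : 3 ≤ k) :
    ∃ n0 : ℕ, ∀ n : ℕ, n0 ≤ n → n % k ≠ 1 →
    ∀ U : Fin k → Finset (Fin n), (∀ i, (U i).card = (n - 1) / k) →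
    ∀ E : Finset (Finset (Fin k × Fin n)),
    (∀ e : Finset (Fin k × Fin n),
        e ∈ E ↔ ((∀ i, (e.filter (fun v => v.1 = i)).card = 1) ∧ ∃ v ∈ e, v.2 ∈ U v.1)) →
    ((∀ S : Finset (Fin k × Fin n), S.card = k - 1 →
        (∀ i, (S.filter (fun v => v.1 = i)).card ≤ 1) →
        (n - 1) / k ≤ (Finset.univ.filter (fun v => insert v S ∈ E)).card) ∧
     (∀ M ⊆ E, (∀ e ∈ M, ∀ f ∈ M, e ≠ f → Disjoint e f) → M.card ≤ k * ((n - 1) / k)) ∧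
     k * ((n - 1) / k) < n - 1) := by
  refine ⟨1, fun n hn hmod U hU E hE => ⟨fun S hS hleg => ?_, fun M hME hdisj => ?_,
    Nat.mul_div_pred_lt_pred (by omega) hn hmod⟩⟩
  · have : Nonempty (Fin k) := ⟨⟨0, by omega⟩⟩
    obtain ⟨i, hi⟩ := exists_card_le_degree U (fun e he => (hE e).mpr he)
      (by rwa [Fintype.card_fin]) hleg
    exact hU i ▸ hi
  · calc #M ≤ ∑ i, #(U i) := card_le_sum_card_of_pairwise_disjoint U
          (fun e he => ((hE e).mp (hME he)).2) hdisj
      _ = k * ((n - 1) / k) := by simp [hU]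
end

section
/- Let 0 < β < 1/(2k²) and let H be a k-partite k-graph with classes of size n and minimum legal co-degree δ_{k-1}(H) > (1-β)n/k. If H contains no independent set W with |W ∩ V_i| ≥ (1-k²β)(k-1)n/k for all i ∈ [k], then ν(H) ≥ n - k². -/
/-!
Let `M` be a maximum matching and suppose `|M| < n - k²`. Every class then keeps more than
`k² - 1` uncovered vertices, enough for `k(k + 1)` pairwise disjoint legal `(k - 1)`-sets
`S_{j,r}` of uncovered vertices, where `S_{j,r}` misses class `j`. By maximality the more than
`(1 - β)n/k` neighbours `N_{j,r}` of `S_{j,r}` are covered by `M`, and no edge of `M` meets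
neighbourhoods in two different classes (else trade it for two edges). Call an edge of `M` rich
for `j` if it meets at least `k` of the `N_{j,r}`, and poor if it is rich for no `j`. In class `j`
block the uncovered vertices and the class-`j` vertices of the poor edges and of the edges meeting
some `N_{j,r}`. An edge of unblocked vertices meets at most `k` edges of `M`, all rich, and Hall's
theorem reroutes each of them through its own `S_{j,r}`: this would enlarge `M`. So the unblocked
vertices are independent, and double counting the `N_{j,r}` shows that they are numerous.
-/

open Finset Function

section

variable {α : Type*} [DecidableEq α]

def IsMaximumMatching (E M : Finset (Finset α)) : Prop :=
  M ⊆ E ∧ (M : Set (Finset α)).Pairwise Disjoint ∧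
    ∀ M' ⊆ E, (M' : Set (Finset α)).Pairwise Disjoint → #M' ≤ #M

theorem exists_isMaximumMatching (E : Finset (Finset α)) : ∃ M, IsMaximumMatching E M := by
  classical
  obtain ⟨M, hM, hmax⟩ := exists_max_image
    {M ∈ E.powerset | ((M : Finset (Finset α)) : Set (Finset α)).Pairwise Disjoint} card
    ⟨∅, by simp⟩
  obtain ⟨hME, hMd⟩ := mem_filter.1 hM
  exact ⟨M, mem_powerset.1 hME, hMd, fun M' hM'E hM' =>
    hmax M' (mem_filter.2 ⟨mem_powerset.2 hM'E, hM'⟩)⟩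

theorem IsMaximumMatching.card_le_of_exchange {E M R F : Finset (Finset α)}
    (hM : IsMaximumMatching E M) (hR : R ⊆ M) (hFE : F ⊆ E)
    (hF : (F : Set (Finset α)).Pairwise Disjoint) (hFne : ∀ g ∈ F, g.Nonempty)
    (hFM : ∀ g ∈ F, ∀ e ∈ M \ R, Disjoint g e) : #F ≤ #R := by
  have hdisj : Disjoint (M \ R) F := disjoint_left.2 fun g hgM hgF =>
    (hFne g hgF).ne_empty (disjoint_self.1 (hFM g hgF g hgM))
  have hmatch : ((M \ R ∪ F : Finset (Finset α)) : Set (Finset α)).Pairwise Disjoint := by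
    rw [coe_union, Set.pairwise_union]
    exact ⟨hM.2.1.mono (coe_subset.2 sdiff_subset), hF,
      fun e he g hg _ => ⟨(hFM g hg e he).symm, hFM g hg e he⟩⟩
  have hle := hM.2.2 _ (union_subset (sdiff_subset.trans hM.1) hFE) hmatch
  rw [card_union_of_disjoint hdisj, card_sdiff_of_subset hR] at hle
  have := card_le_card hR
  omega

theorem Set.Pairwise.pairwiseDisjoint_inter {M : Finset (Finset α)}
    (hM : (M : Set (Finset α)).Pairwise Disjoint) (s : Finset α) :
    (M : Set (Finset α)).PairwiseDisjoint (· ∩ s) :=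
  hM.mono' fun _ _ h => h.mono Finset.inter_subset_left Finset.inter_subset_left

theorem card_filter_not_disjoint_le {M : Finset (Finset α)}
    (hM : (M : Set (Finset α)).Pairwise Disjoint) (s : Finset α) :
    #{e ∈ M | ¬Disjoint e s} ≤ #s :=
  calc #{e ∈ M | ¬Disjoint e s} ≤ #({e ∈ M | ¬Disjoint e s}.biUnion (· ∩ s)) :=
        card_le_card_biUnion
          ((hM.pairwiseDisjoint_inter s).subset (coe_subset.2 (filter_subset _ _)))
          fun _ he => not_disjoint_iff_nonempty_inter.1 (mem_filter.1 he).2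
    _ ≤ #s := card_le_card (biUnion_subset.2 fun _ _ => inter_subset_right)

theorem exists_injective_mem_of_card_le {ι β : Type*} [Fintype ι] [DecidableEq β]
    (t : ι → Finset β) (ht : ∀ i, Fintype.card ι ≤ #(t i)) :
    ∃ f : ι → β, Injective f ∧ ∀ i, f i ∈ t i := by
  refine (all_card_le_biUnion_card_iff_exists_injective t).1 fun s => ?_
  obtain rfl | ⟨i, hi⟩ := s.eq_empty_or_nonempty
  · simp
  · exact (card_le_univ s).trans ((ht i).trans (card_le_card (subset_biUnion_of_mem t hi)))

theorem two_mul_extremal_bound_le {k n β : ℝ} (hk : 2 ≤ k) (hβ : 0 ≤ β) (hn : 0 ≤ n) :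
    2 * ((1 - k ^ 2 * β) * (k - 1) * n / k) ≤
      2 * (k - 1) * ((1 - β) * n / k) - (k + 1) * (n - k * ((1 - β) * n / k)) := by
  have hslack : 2 * (k - 1) * ((1 - β) * n / k) - (k + 1) * (n - k * ((1 - β) * n / k)) -
      2 * ((1 - k ^ 2 * β) * (k - 1) * n / k) =
        β * n * ((k - 2) * (2 * k - 1) * (k + 1)) / k := by
    field_simp
    ring
  have : 0 ≤ (k - 2) * (2 * k - 1) * (k + 1) := by
    apply mul_nonneg (mul_nonneg _ _) _ <;> linarith
  have : 0 ≤ β * n * ((k - 2) * (2 * k - 1) * (k + 1)) / k := by positivity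
  linarith

structure PartiteHypergraph (α : Type*) [DecidableEq α] (k : ℕ) where
  part : Fin k → Finset α
  existsUnique_mem_part : ∀ v, ∃! i, v ∈ part i
  edges : Finset (Finset α)
  card_inter_part : ∀ e ∈ edges, ∀ i, #(e ∩ part i) = 1

namespace PartiteHypergraph

variable {k : ℕ} (H : PartiteHypergraph α k)

theorem eq_of_mem_part {v : α} {i j : Fin k} (hi : v ∈ H.part i) (hj : v ∈ H.part j) : i = j :=
  (H.existsUnique_mem_part v).unique hi hj

theorem card_eq_sum_card_inter_part (s : Finset α) : #s = ∑ i, #(s ∩ H.part i) := by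
  have hs : s = univ.biUnion fun i => s ∩ H.part i := by
    ext v
    simpa using fun _ => (H.existsUnique_mem_part v).exists
  calc #s = #(univ.biUnion fun i => s ∩ H.part i) := congrArg card hs
    _ = _ := card_biUnion fun i _ j _ hij => disjoint_left.2 fun _ hi hj =>
      hij (H.eq_of_mem_part (mem_inter.1 hi).2 (mem_inter.1 hj).2)

theorem card_edge {e : Finset α} (he : e ∈ H.edges) : #e = k := by
  simp [H.card_eq_sum_card_inter_part e, H.card_inter_part e he]

section Matching

variable {H} {M : Finset (Finset α)}

theorem card_biUnion_inter_part (hME : M ⊆ H.edges) (hM : (M : Set (Finset α)).Pairwise Disjoint)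
    (i : Fin k) : #(M.biUnion id ∩ H.part i) = #M := by
  simp only [biUnion_inter, id]
  rw [card_biUnion (hM.pairwiseDisjoint_inter _),
    sum_congr rfl fun e he => H.card_inter_part e (hME he) i, sum_const, smul_eq_mul, mul_one]

theorem card_filter_not_disjoint (hME : M ⊆ H.edges)
    (hM : (M : Set (Finset α)).Pairwise Disjoint) {j : Fin k} {s : Finset α} (hs : s ⊆ H.part j)
    (hsM : s ⊆ M.biUnion id) : #{e ∈ M | ¬Disjoint e s} = #s := by
  have hcover : {e ∈ M | ¬Disjoint e s}.biUnion (· ∩ s) = s := by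
    refine (biUnion_subset.2 fun _ _ => inter_subset_right).antisymm fun v hv => ?_
    obtain ⟨e, he, hve⟩ := mem_biUnion.1 (hsM hv)
    exact mem_biUnion.2
      ⟨e, mem_filter.2 ⟨he, not_disjoint_iff.2 ⟨v, hve, hv⟩⟩, mem_inter.2 ⟨hve, hv⟩⟩
  have hone : ∀ e ∈ {e ∈ M | ¬Disjoint e s}, #(e ∩ s) = 1 := by
    intro e he
    obtain ⟨he, hes⟩ := mem_filter.1 he
    refine le_antisymm ?_ (card_pos.2 (not_disjoint_iff_nonempty_inter.1 hes))
    calc #(e ∩ s) ≤ #(e ∩ H.part j) := card_le_card (inter_subset_inter_left hs)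
      _ = 1 := H.card_inter_part e (hME he) j
  calc #{e ∈ M | ¬Disjoint e s} = ∑ e ∈ {e ∈ M | ¬Disjoint e s}, #(e ∩ s) := by
        rw [sum_congr rfl hone, sum_const, smul_eq_mul, mul_one]
    _ = #s := by
      rw [← card_biUnion ((hM.pairwiseDisjoint_inter s).subset
        (coe_subset.2 (filter_subset _ _))), hcover]

end Matching

-- `tuple (j, r)` is the set `S_{j,r}` of the proof sketch.
structure Absorbers (H : PartiteHypergraph α k) (M : Finset (Finset α)) where
  tuple : Fin k × Fin (k + 1) → Finset α
  card_tuple : ∀ p, #(tuple p) = k - 1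
  card_tuple_inter_part_le : ∀ p i, #(tuple p ∩ H.part i) ≤ 1
  disjoint_tuple_part : ∀ p, Disjoint (tuple p) (H.part p.1)
  disjoint_tuple_biUnion : ∀ p, Disjoint (tuple p) (M.biUnion id)
  pairwise_disjoint_tuple : Pairwise (Disjoint on tuple)

theorem exists_absorbers (M : Finset (Finset α))
    (hU : ∀ i, (k - 1) * (k + 1) ≤ #(H.part i \ M.biUnion id)) : Nonempty (H.Absorbers M) := by
  have hemb (i : Fin k) :
      Nonempty (({j : Fin k // j ≠ i} × Fin (k + 1)) ↪ ↥(H.part i \ M.biUnion id)) :=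
    Function.Embedding.nonempty_of_card_le (by simpa using hU i)
  -- `x i (j, r)` is the class-`i` vertex of the absorber `(j, r)`
  let x (i : Fin k) (q : {j // j ≠ i} × Fin (k + 1)) : α := (hemb i).some q
  have hx (i q) : x i q ∈ H.part i \ M.biUnion id := ((hemb i).some q).2
  have hx_inj (i) : Injective (x i) := Subtype.val_injective.comp (hemb i).some.injective
  let tuple (p : Fin k × Fin (k + 1)) : Finset α :=
    univ.image fun i : {i // i ≠ p.1} => x i ⟨⟨p.1, i.2.symm⟩, p.2⟩
  have hclass {p v i} (hv : v ∈ tuple p) (hvi : v ∈ H.part i) :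
      ∃ h : i ≠ p.1, x i ⟨⟨p.1, h.symm⟩, p.2⟩ = v := by
    obtain ⟨⟨i', hi'⟩, -, rfl⟩ := mem_image.1 hv
    obtain rfl := H.eq_of_mem_part (mem_sdiff.1 (hx _ _)).1 hvi
    exact ⟨hi', rfl⟩
  refine ⟨⟨tuple, fun p => ?_, fun p i => ?_, fun p => ?_, fun p => ?_, fun p q hpq => ?_⟩⟩
  · refine (card_image_of_injective _ fun i i' h => Subtype.ext ?_).trans (by simp)
    exact H.eq_of_mem_part (mem_sdiff.1 (hx _ _)).1 (by rw [h]; exact (mem_sdiff.1 (hx _ _)).1)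
  · refine card_le_one.2 fun a ha b hb => ?_
    obtain ⟨-, rfl⟩ := hclass (mem_inter.1 ha).1 (mem_inter.1 ha).2
    obtain ⟨-, rfl⟩ := hclass (mem_inter.1 hb).1 (mem_inter.1 hb).2
    rfl
  · exact disjoint_left.2 fun v hv hvp => (hclass hv hvp).1 rfl
  · refine disjoint_left.2 fun v hv => ?_
    obtain ⟨i, -, rfl⟩ := mem_image.1 hv
    exact (mem_sdiff.1 (hx _ _)).2
  · refine disjoint_left.2 fun v hvp hvq => ?_
    obtain ⟨i, hi⟩ := (H.existsUnique_mem_part v).exists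
    obtain ⟨hip, rfl⟩ := hclass hvp hi
    obtain ⟨hiq, hv⟩ := hclass hvq hi
    have := hx_inj i hv
    simp only [Prod.mk.injEq, Subtype.mk.injEq] at this
    exact hpq (Prod.ext this.1.symm this.2.symm)

namespace Absorbers

variable {H} {M : Finset (Finset α)} (A : H.Absorbers M)

theorem notMem_tuple {v : α} (hv : v ∈ M.biUnion id) (p : Fin k × Fin (k + 1)) :
    v ∉ A.tuple p :=
  disjoint_right.1 (A.disjoint_tuple_biUnion p) hv

theorem disjoint_insert_tuple {e : Finset α} {v : α} (he : e ∈ M) (hv : v ∉ e)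
    (p : Fin k × Fin (k + 1)) : Disjoint (insert v (A.tuple p)) e :=
  disjoint_insert_left.2
    ⟨hv, disjoint_right.2 fun _ hw => A.notMem_tuple (mem_biUnion.2 ⟨e, he, hw⟩) p⟩

theorem disjoint_insert_tuple_insert_tuple {p q : Fin k × Fin (k + 1)} (hpq : p ≠ q) {v w : α}
    (hvw : v ≠ w) (hv : v ∈ M.biUnion id) (hw : w ∈ M.biUnion id) :
    Disjoint (insert v (A.tuple p)) (insert w (A.tuple q)) :=
  disjoint_insert_left.2 ⟨fun h => (mem_insert.1 h).elim hvw (A.notMem_tuple hv q),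
    disjoint_insert_right.2 ⟨A.notMem_tuple hw p, A.pairwise_disjoint_tuple hpq⟩⟩

variable [Fintype α]

def nbhd (p : Fin k × Fin (k + 1)) : Finset α := {v | insert v (A.tuple p) ∈ H.edges}

def hits (j : Fin k) (e : Finset α) : ℕ := #{r : Fin (k + 1) | ¬Disjoint e (A.nbhd (j, r))}

def touched (j : Fin k) : Finset (Finset α) := {e ∈ M | 0 < A.hits j e}

def rich (j : Fin k) : Finset (Finset α) := {e ∈ M | k ≤ A.hits j e}

def poor : Finset (Finset α) := M \ univ.biUnion A.rich

def blocked (j : Fin k) : Finset α :=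
  (H.part j \ M.biUnion id) ∪ (A.touched j ∪ A.poor).biUnion (· ∩ H.part j)

def free : Finset α := {v | ∀ j, v ∉ A.blocked j}

theorem nbhd_subset_part (p : Fin k × Fin (k + 1)) : A.nbhd p ⊆ H.part p.1 := by
  intro v hv
  obtain ⟨w, hw⟩ := card_eq_one.1 (H.card_inter_part _ (mem_filter.1 hv).2 p.1)
  obtain ⟨hw, hwp⟩ := mem_inter.1 (hw ▸ mem_singleton_self w)
  obtain rfl | hwt := mem_insert.1 hw
  · exact hwp
  · exact absurd hwp (disjoint_left.1 (A.disjoint_tuple_part p) hwt)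

theorem nbhd_subset_biUnion (hM : IsMaximumMatching H.edges M) (p : Fin k × Fin (k + 1)) :
    A.nbhd p ⊆ M.biUnion id := by
  intro v hv
  by_contra hvM
  have := hM.card_le_of_exchange (empty_subset M) (F := {insert v (A.tuple p)})
    (singleton_subset_iff.2 (mem_filter.1 hv).2) (by simp) (by simp) fun g hg e he => by
      obtain rfl := mem_singleton.1 hg
      rw [sdiff_empty] at he
      exact A.disjoint_insert_tuple he (fun hve => hvM (mem_biUnion.2 ⟨e, he, hve⟩)) p
  simp at this

/-- Exchanging `e` for the two edges through its vertices in `N p` and `N q`. -/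
theorem disjoint_or_disjoint_nbhd (hM : IsMaximumMatching H.edges M) {e : Finset α} (he : e ∈ M)
    {p q : Fin k × Fin (k + 1)} (hpq : p.1 ≠ q.1) :
    Disjoint e (A.nbhd p) ∨ Disjoint e (A.nbhd q) := by
  by_contra! h
  obtain ⟨v, hve, hvp⟩ := not_disjoint_iff.1 h.1
  obtain ⟨w, hwe, hwq⟩ := not_disjoint_iff.1 h.2
  have hvw : v ≠ w := fun hvw => hpq <|
    H.eq_of_mem_part (A.nbhd_subset_part p hvp) (hvw ▸ A.nbhd_subset_part q hwq)
  have hdisj := A.disjoint_insert_tuple_insert_tuple (fun h => hpq (congrArg Prod.fst h)) hvw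
    (mem_biUnion.2 ⟨e, he, hve⟩) (mem_biUnion.2 ⟨e, he, hwe⟩)
  have hne : insert v (A.tuple p) ≠ insert w (A.tuple q) := fun h =>
    (insert_nonempty _ _).ne_empty (disjoint_self.1 (h ▸ hdisj))
  have hout {x : α} (hx : x ∈ e) (r : Fin k × Fin (k + 1)) :
      ∀ e' ∈ M \ {e}, Disjoint (insert x (A.tuple r)) e' := fun e' he' => by
    obtain ⟨he'M, he'⟩ := mem_sdiff.1 he'
    exact A.disjoint_insert_tuple he'M
      (disjoint_left.1 (hM.2.1 he he'M (Ne.symm (notMem_singleton.1 he'))) hx) r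
  have := hM.card_le_of_exchange (singleton_subset_iff.2 he)
    (F := {insert v (A.tuple p), insert w (A.tuple q)})
    (insert_subset_iff.2 ⟨(mem_filter.1 hvp).2, singleton_subset_iff.2 (mem_filter.1 hwq).2⟩)
    (by rw [coe_pair, Set.pairwise_pair]; exact fun _ => ⟨hdisj, hdisj.symm⟩)
    (by simp) fun g hg => by
      obtain rfl | hg := mem_insert.1 hg
      · exact hout hve p
      · obtain rfl := mem_singleton.1 hg
        exact hout hwe q
  rw [card_pair hne, card_singleton] at this
  omega

theorem hits_le (j : Fin k) (e : Finset α) : A.hits j e ≤ k + 1 :=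
  (card_filter_le _ _).trans (by simp)

theorem rich_subset_touched (j : Fin k) : A.rich j ⊆ A.touched j := fun _ he =>
  mem_filter.2 ⟨(mem_filter.1 he).1, j.pos.trans_le (mem_filter.1 he).2⟩

theorem disjoint_touched (hM : IsMaximumMatching H.edges M) {i j : Fin k} (hij : i ≠ j) :
    Disjoint (A.touched i) (A.touched j) := by
  refine disjoint_left.2 fun e hi hj => ?_
  obtain ⟨r, hr⟩ := card_pos.1 (mem_filter.1 hi).2
  obtain ⟨r', hr'⟩ := card_pos.1 (mem_filter.1 hj).2
  rcases A.disjoint_or_disjoint_nbhd hM (mem_filter.1 hi).1 (p := (i, r)) (q := (j, r')) hij with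
    h | h
  exacts [(mem_filter.1 hr).2 h, (mem_filter.1 hr').2 h]

theorem sum_card_nbhd (hM : IsMaximumMatching H.edges M) (j : Fin k) :
    ∑ r, #(A.nbhd (j, r)) = ∑ e ∈ M, A.hits j e :=
  calc ∑ r, #(A.nbhd (j, r)) = ∑ r, #{e ∈ M | ¬Disjoint e (A.nbhd (j, r))} :=
        sum_congr rfl fun r _ => (card_filter_not_disjoint hM.1 hM.2.1
          (A.nbhd_subset_part (j, r)) (A.nbhd_subset_biUnion hM (j, r))).symm
    _ = ∑ e ∈ M, A.hits j e := (sum_card_bipartiteAbove_eq_sum_card_bipartiteBelow _).symm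

theorem sum_card_nbhd_le (hM : IsMaximumMatching H.edges M) (j : Fin k) :
    ∑ r, #(A.nbhd (j, r)) ≤ (k - 1) * #(A.touched j) + 2 * #(A.rich j) := by
  rw [A.sum_card_nbhd hM j, touched, rich, card_eq_sum_ones, card_eq_sum_ones, sum_filter,
    sum_filter, mul_sum, mul_sum, ← sum_add_distrib]
  refine sum_le_sum fun e _ => ?_
  have := A.hits_le j e
  split_ifs <;> omega

theorem sum_card_touched_le (hM : IsMaximumMatching H.edges M) : ∑ j, #(A.touched j) ≤ #M := by
  rw [← card_biUnion fun i _ j _ hij => A.disjoint_touched hM hij]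
  exact card_le_card (biUnion_subset.2 fun j _ => filter_subset _ _)

theorem card_poor_add_sum_card_rich (hM : IsMaximumMatching H.edges M) :
    #A.poor + ∑ j, #(A.rich j) = #M := by
  rw [← card_biUnion fun i _ j _ hij => (A.disjoint_touched hM hij).mono
    (A.rich_subset_touched i) (A.rich_subset_touched j)]
  exact card_sdiff_add_card_eq_card (biUnion_subset.2 fun j _ => filter_subset _ _)

theorem blocked_subset_part (j : Fin k) : A.blocked j ⊆ H.part j :=
  union_subset sdiff_subset (biUnion_subset.2 fun _ _ => inter_subset_right)

theorem card_part_le_card_free_inter_add_card_blocked (i : Fin k) :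
    #(H.part i) ≤ #(A.free ∩ H.part i) + #(A.blocked i) := by
  refine (card_le_card fun v hv => ?_).trans (card_union_le _ _)
  by_cases hvb : v ∈ A.blocked i
  · exact mem_union_right _ hvb
  · refine mem_union_left _ (mem_inter.2 ⟨mem_filter.2 ⟨mem_univ _, fun j hvj => ?_⟩, hv⟩)
    obtain rfl := H.eq_of_mem_part hv (A.blocked_subset_part j hvj)
    exact hvb hvj

theorem card_blocked_add_card_le (hM : IsMaximumMatching H.edges M) (j : Fin k) :
    #(A.blocked j) + #M ≤ #(H.part j) + #(A.touched j) + #A.poor := by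
  have hcover := card_sdiff_add_card_inter (H.part j) (M.biUnion id)
  rw [inter_comm, card_biUnion_inter_part hM.1 hM.2.1] at hcover
  have hedges :
      #((A.touched j ∪ A.poor).biUnion (· ∩ H.part j)) ≤ #(A.touched j) + #A.poor := by
    refine card_biUnion_le.trans ?_
    have hsub : A.touched j ∪ A.poor ⊆ H.edges :=
      (union_subset (filter_subset _ _) sdiff_subset).trans hM.1
    rw [sum_congr rfl fun e he => H.card_inter_part e (hsub he) j, sum_const, smul_eq_mul,
      mul_one]
    exact card_union_le _ _
  have := card_union_le (H.part j \ M.biUnion id)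
    ((A.touched j ∪ A.poor).biUnion (· ∩ H.part j))
  rw [blocked]
  omega

theorem le_card_free_inter_part (hM : IsMaximumMatching H.edges M) {n : ℕ}
    (hn : ∀ i, #(H.part i) = n) {d : ℝ} (hd : ∀ p, d < #(A.nbhd p)) (i : Fin k) :
    2 * (k - 1) * d - (k + 1) * (n - k * d) ≤ 2 * #(A.free ∩ H.part i) := by
  have hk : 1 ≤ k := i.pos
  have hk' : (1 : ℝ) ≤ k := by exact_mod_cast hk
  have hnbhd (j : Fin k) : ((k : ℝ) + 1) * d < (k - 1) * #(A.touched j) + 2 * #(A.rich j) := by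
    have hsum : ((k : ℝ) + 1) * d < ∑ r : Fin (k + 1), (#(A.nbhd (j, r)) : ℝ) := by
      simpa using sum_lt_sum_of_nonempty univ_nonempty fun r (_ : r ∈ univ) => hd (j, r)
    have hle : ((∑ r, #(A.nbhd (j, r)) : ℕ) : ℝ) ≤
        ((k - 1) * #(A.touched j) + 2 * #(A.rich j) : ℕ) := by
      exact_mod_cast A.sum_card_nbhd_le hM j
    push_cast [Nat.cast_sub hk] at hle
    linarith
  have htouched (j : Fin k) : d < #(A.touched j) := by
    have hrich : (#(A.rich j) : ℝ) ≤ #(A.touched j) := by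
      exact_mod_cast card_le_card (A.rich_subset_touched j)
    nlinarith [hnbhd j]
  have hsum : (k : ℝ) * ((k + 1) * d) <
      (k - 1) * ∑ j, (#(A.touched j) : ℝ) + 2 * ∑ j, (#(A.rich j) : ℝ) := by
    simpa [sum_add_distrib, mul_sum] using
      sum_lt_sum_of_nonempty ⟨i, mem_univ i⟩ fun j (_ : j ∈ univ) => hnbhd j
  have hT : ∑ j, (#(A.touched j) : ℝ) ≤ #M := by exact_mod_cast A.sum_card_touched_le hM
  have hR : (#A.poor : ℝ) + ∑ j, (#(A.rich j) : ℝ) = #M := by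
    exact_mod_cast A.card_poor_add_sum_card_rich hM
  have hTi : (#(A.touched i) : ℝ) + (k - 1) * d ≤ ∑ j, (#(A.touched j) : ℝ) := by
    rw [← sum_erase_add _ _ (mem_univ i)]
    have := card_nsmul_le_sum (univ.erase i) (fun j => (#(A.touched j) : ℝ)) d
      fun j _ => (htouched j).le
    rw [card_erase_of_mem (mem_univ i), card_univ, Fintype.card_fin, nsmul_eq_mul,
      Nat.cast_sub hk, Nat.cast_one] at this
    linarith
  have hblocked : (#(A.blocked i) : ℝ) + #M ≤ n + #(A.touched i) + #A.poor := by
    exact_mod_cast hn i ▸ A.card_blocked_add_card_le hM i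
  have hpart : (n : ℝ) ≤ #(A.free ∩ H.part i) + #(A.blocked i) := by
    exact_mod_cast hn i ▸ A.card_part_le_card_free_inter_add_card_blocked i
  have hMn : (#M : ℝ) ≤ n := by
    exact_mod_cast hn i ▸ (card_biUnion_inter_part hM.1 hM.2.1 i).symm.le.trans
      (card_le_card inter_subset_right)
  nlinarith [mul_le_mul_of_nonneg_left hT (by linarith : (0 : ℝ) ≤ k - 1),
    mul_le_mul_of_nonneg_left hMn (by linarith : (0 : ℝ) ≤ k + 1)]

theorem free_subset_biUnion : A.free ⊆ M.biUnion id := by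
  intro v hv
  obtain ⟨i, hi⟩ := (H.existsUnique_mem_part v).exists
  by_contra hvM
  exact (mem_filter.1 hv).2 i (mem_union_left _ (mem_sdiff.2 ⟨hi, hvM⟩))

theorem notMem_free {e : Finset α} {v : α} {j : Fin k} (he : e ∈ A.touched j ∪ A.poor)
    (hve : v ∈ e) (hvj : v ∈ H.part j) : v ∉ A.free := fun hv =>
  (mem_filter.1 hv).2 j (mem_union_right _ (mem_biUnion.2 ⟨e, he, mem_inter.2 ⟨hve, hvj⟩⟩))

theorem exists_mem_rich {e : Finset α} (he : e ∈ M) (hfree : ¬Disjoint e A.free) :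
    ∃ j, e ∈ A.rich j := by
  obtain ⟨v, hve, hv⟩ := not_disjoint_iff.1 hfree
  obtain ⟨i, hi⟩ := (H.existsUnique_mem_part v).exists
  by_contra! h
  refine A.notMem_free (mem_union_right _ (mem_sdiff.2 ⟨he, fun hrich => ?_⟩)) hve hi hv
  obtain ⟨j, -, hj⟩ := mem_biUnion.1 hrich
  exact h j hj

/-- Replacing the edges `R ⊆ M` by `f` and by one edge `x e ∪ S_{ρ e}` for each `e ∈ R`
would enlarge the maximum matching `M`. -/
theorem false_of_reroute (hM : IsMaximumMatching H.edges M) {R : Finset (Finset α)} (hR : R ⊆ M)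
    {ρ : R → Fin k × Fin (k + 1)} (hρ : Injective ρ) {x : R → α} (hxe : ∀ e, x e ∈ e.1)
    (hxN : ∀ e, x e ∈ A.nbhd (ρ e)) {f : Finset α} (hf : f ∈ H.edges) (hf_ne : f.Nonempty)
    (hfM : f ⊆ M.biUnion id) (hfR : ∀ e ∈ M \ R, Disjoint f e) (hxf : ∀ e, x e ∉ f) :
    False := by
  let g (e : R) : Finset α := insert (x e) (A.tuple (ρ e))
  have hxM (e : R) : x e ∈ M.biUnion id := mem_biUnion.2 ⟨e, hR e.2, hxe e⟩
  have hg_disj : Pairwise (Disjoint on g) := fun e e' hne =>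
    A.disjoint_insert_tuple_insert_tuple (hρ.ne hne) (fun h => disjoint_left.1
      (hM.2.1 (hR e.2) (hR e'.2) (Subtype.coe_injective.ne hne)) (hxe e) (h ▸ hxe e'))
      (hxM e) (hxM e')
  have hg_f (e : R) : Disjoint (g e) f :=
    disjoint_insert_left.2 ⟨hxf e, disjoint_right.2 fun _ hv => A.notMem_tuple (hfM hv) _⟩
  have hg_inj : Injective g := fun e e' h => by
    by_contra hne
    have hdisj : Disjoint (g e) (g e') := hg_disj hne
    rw [h] at hdisj
    exact (insert_nonempty _ _).ne_empty (disjoint_self.1 hdisj)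
  have hf_notMem : f ∉ univ.image g := fun h => by
    obtain ⟨e, -, he⟩ := mem_image.1 h
    exact hf_ne.ne_empty (disjoint_self.1 (he ▸ hg_f e))
  have := hM.card_le_of_exchange hR (F := insert f (univ.image g))
    (insert_subset_iff.2 ⟨hf, image_subset_iff.2 fun e _ => (mem_filter.1 (hxN e)).2⟩)
    (by
      rw [coe_insert, coe_image, coe_univ, Set.image_univ, Set.pairwise_insert]
      refine ⟨hg_disj.range_pairwise, ?_⟩
      rintro _ ⟨e, rfl⟩ -
      exact ⟨(hg_f e).symm, hg_f e⟩)
    (by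
      simp only [mem_insert, mem_image, mem_univ, true_and]
      rintro _ (rfl | ⟨e, rfl⟩)
      exacts [hf_ne, insert_nonempty _ _])
    (by
      simp only [mem_insert, mem_image, mem_univ, true_and]
      rintro _ (rfl | ⟨e, rfl⟩) e' he'
      · exact hfR e' he'
      · obtain ⟨he'M, he'R⟩ := mem_sdiff.1 he'
        exact A.disjoint_insert_tuple he'M (disjoint_left.1
          (hM.2.1 (hR e.2) he'M fun h => he'R (h ▸ e.2)) (hxe e)) _)
  rw [card_insert_of_notMem hf_notMem, card_image_of_injective _ hg_inj, card_univ,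
    Fintype.card_coe] at this
  omega

/-- The edges `R` of `M` meeting `f` number at most `k` and are all rich, so Hall's theorem gives
them distinct absorbers `ρ e` with `e` meeting `N (ρ e)`. -/
theorem not_subset_free (hM : IsMaximumMatching H.edges M) (hk : 0 < k) {f : Finset α}
    (hf : f ∈ H.edges) : ¬f ⊆ A.free := by
  intro hfW
  let R := {e ∈ M | ¬Disjoint e f}
  have hR : #R ≤ k := (card_filter_not_disjoint_le hM.2.1 f).trans (H.card_edge hf).le
  have hrich (e : R) : ∃ j, e.1 ∈ A.rich j :=
    A.exists_mem_rich (mem_filter.1 e.2).1 fun h => (mem_filter.1 e.2).2 (h.mono_right hfW)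
  choose φ hφ using hrich
  obtain ⟨ρ, hρ_inj, hρ⟩ := exists_injective_mem_of_card_le
    (fun e : R => {φ e} ×ˢ ({r | ¬Disjoint e.1 (A.nbhd (φ e, r))} : Finset (Fin (k + 1))))
    fun e => by simpa [hits] using hR.trans (mem_filter.1 (hφ e)).2
  have hρφ (e : R) : (ρ e).1 = φ e := mem_singleton.1 (mem_product.1 (hρ e)).1
  have hmeet (e : R) : ¬Disjoint e.1 (A.nbhd (ρ e)) := by
    simpa [← hρφ e] using (mem_product.1 (hρ e)).2
  choose x hxe hxN using fun e => not_disjoint_iff.1 (hmeet e)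
  refine A.false_of_reroute hM (filter_subset _ _) hρ_inj hxe hxN hf
    (card_pos.1 ((H.card_edge hf).trans_gt hk)) (hfW.trans A.free_subset_biUnion)
    (fun e he => by_contra fun h => (mem_sdiff.1 he).2 (mem_filter.2
      ⟨(mem_sdiff.1 he).1, fun h' => h h'.symm⟩)) fun e hxf => ?_
  refine A.notMem_free (mem_union_left _ (A.rich_subset_touched _ (hφ e))) (hxe e) ?_ (hfW hxf)
  exact hρφ e ▸ A.nbhd_subset_part _ (hxN e)

end Absorbers

end PartiteHypergraph

end

theorem stmt4_general {α : Type*} [Fintype α] [DecidableEq α]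
    (k n : ℕ) (hk : 1 ≤ k) (β : ℝ) (hβ0 : 0 < β)
    (P : Fin k → Finset α)
    (hP : ∀ v : α, ∃! i, v ∈ P i)
    (hPcard : ∀ i, (P i).card = n)
    (E : Finset (Finset α))
    (hE : ∀ e ∈ E, ∀ i, (e ∩ P i).card = 1)
    (hdeg : ∀ S : Finset α, S.card = k - 1 → (∀ i, (S ∩ P i).card ≤ 1) →
      (1 - β) * n / k < ((Finset.univ.filter (fun v => insert v S ∈ E)).card : ℝ))
    (hnotext : ¬ ∃ W : Finset α, (∀ e ∈ E, ¬ e ⊆ W) ∧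
      ∀ i, (1 - (k : ℝ)^2 * β) * ((k : ℝ) - 1) * n / k ≤ ((W ∩ P i).card : ℝ)) :
    ∃ M ⊆ E, (∀ e ∈ M, ∀ f ∈ M, e ≠ f → Disjoint e f) ∧ n - k^2 ≤ M.card := by
  let H : PartiteHypergraph α k := ⟨P, hP, E, hE⟩
  obtain ⟨M, hM⟩ := exists_isMaximumMatching E
  refine ⟨M, hM.1, hM.2.1, ?_⟩
  by_contra! hMn
  apply hnotext
  obtain rfl | hk2 := hk.eq_or_lt
  · refine ⟨∅, fun e he hsub => ?_, fun i => by simp⟩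
    simpa [subset_empty.1 hsub] using H.card_edge he
  have hU (i : Fin k) : (k - 1) * (k + 1) ≤ #(P i \ M.biUnion id) := by
    have hcover := card_sdiff_add_card_inter (P i) (M.biUnion id)
    rw [inter_comm, H.card_biUnion_inter_part hM.1 hM.2.1, hPcard] at hcover
    have : (k - 1) * (k + 1) + 1 = k ^ 2 := by zify [hk]; ring
    omega
  obtain ⟨A⟩ := H.exists_absorbers M hU
  refine ⟨A.free, fun e he => A.not_subset_free hM hk he, fun i => ?_⟩
  have hfree := A.le_card_free_inter_part hM hPcard (d := (1 - β) * n / k)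
    (fun p => hdeg _ (A.card_tuple p) (A.card_tuple_inter_part_le p)) i
  have hk2' : (2 : ℝ) ≤ k := by exact_mod_cast hk2
  linarith [two_mul_extremal_bound_le hk2' hβ0.le n.cast_nonneg]

/-- If 0 < β < 1/(2k²), H is a k-partite k-graph with classes of size n,
δ_{k-1}(H) > (1-β)n/k, and H has no independent set W with
|W ∩ V_i| ≥ (1-k²β)(k-1)n/k for all i, then ν(H) ≥ n - k². -/
theorem stmt4 {α : Type*} [Fintype α] [DecidableEq α]
    (k n : ℕ) (hk : 1 ≤ k) (β : ℝ) (hβ0 : 0 < β) (hβ1 : β < 1 / (2 * (k : ℝ)^2))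
    (P : Fin k → Finset α)
    (hP : ∀ v : α, ∃! i, v ∈ P i)
    (hPcard : ∀ i, (P i).card = n)
    (E : Finset (Finset α))
    (hE : ∀ e ∈ E, ∀ i, (e ∩ P i).card = 1)
    (hdeg : ∀ S : Finset α, S.card = k - 1 → (∀ i, (S ∩ P i).card ≤ 1) →
      (1 - β) * n / k < ((Finset.univ.filter (fun v => insert v S ∈ E)).card : ℝ))
    (hnotext : ¬ ∃ W : Finset α, (∀ e ∈ E, ¬ e ⊆ W) ∧
      ∀ i, (1 - (k : ℝ)^2 * β) * ((k : ℝ) - 1) * n / k ≤ ((W ∩ P i).card : ℝ)) :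
    ∃ M ⊆ E, (∀ e ∈ M, ∀ f ∈ M, e ≠ f → Disjoint e f) ∧ n - k^2 ≤ M.card :=
  stmt4_general k n hk β hβ0 P hP hPcard E hE hdeg hnotext
end

section
/- In the setting of the proof of Lemma 3 (minimum co-degree > (1-β)n/k, maximum matching M of size m < n, independent leftover set U, and sets C_j of vertices in V_j extending one of k fixed disjoint legal (k-1)-sets in U): each edge of M contains at most one vertex of C = ⋃_j C_j; consequently Σ_j |C_j| ≤ m < n, and combined with |C_j| > (1-β)n/k for all j, one gets |C_l| < (1 + (k-1)β)n/k for every l ∈ [k]. -/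
/-!
Every vertex of `C = ⋃ⱼ Cⱼ` lies in `V(M)`, since an edge `Aᵢʲ ∪ {v}` with `v ∉ V(M)` could be
added to `M`. Two vertices `u ∈ Cⱼ`, `w ∈ Cⱼ'` of the same edge `e ∈ M` lie in different classes,
so `j ≠ j'` and the edges `Aᵢʲ ∪ {u}`, `Aᵢ'ʲ' ∪ {w}` are disjoint; replacing `e` by them would
enlarge `M`. Hence `|C| ≤ |M| < n`, while each `|Cⱼ|` exceeds the codegree bound `(1-β)n/k` of a
legal `(k-1)`-set avoiding `Vⱼ`; subtracting the other `k - 1` of these lower bounds from `n`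
gives the upper bound on `|Cₗ|`.
-/

open Finset

section

variable {α : Type*} [DecidableEq α]

structure IsMaximumMatching_s5 (E M : Finset (Finset α)) : Prop where
  subset : M ⊆ E
  pairwise_disjoint : (M : Set (Finset α)).Pairwise Disjoint
  card_le : ∀ M' ⊆ E, (M' : Set (Finset α)).Pairwise Disjoint → M'.card ≤ M.card

namespace IsMaximumMatching_s5

variable {E M : Finset (Finset α)}

theorem notMem_of_disjoint_biUnion {X e : Finset α} (hXne : X.Nonempty)
    (hX : Disjoint X (M.biUnion id)) (hXe : X ⊆ e) : e ∉ M := fun he =>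
  hXne.ne_empty (disjoint_self.mp (hX.mono_right (hXe.trans (subset_biUnion_of_mem id he))))

theorem not_disjoint_biUnion (hM : IsMaximumMatching_s5 E M) {e : Finset α} (he : e ∈ E)
    (hne : e.Nonempty) : ¬ Disjoint e (M.biUnion id) := by
  intro hfree
  have heM : e ∉ M := notMem_of_disjoint_biUnion hne hfree subset_rfl
  have hpair : ((insert e M : Finset (Finset α)) : Set (Finset α)).Pairwise Disjoint := by
    rw [coe_insert]
    exact hM.pairwise_disjoint.insert_of_symm fun f hf _ =>
      hfree.mono_right (subset_biUnion_of_mem id hf)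
  have := hM.card_le _ (insert_subset he hM.subset) hpair
  rw [card_insert_of_notMem heM] at this
  omega

theorem mem_biUnion_of_insert_mem (hM : IsMaximumMatching_s5 E M) {X : Finset α} {v : α}
    (hX : Disjoint X (M.biUnion id)) (hvX : insert v X ∈ E) : v ∈ M.biUnion id := by
  by_contra hv
  exact hM.not_disjoint_biUnion hvX (insert_nonempty v X) (disjoint_insert_left.mpr ⟨hv, hX⟩)

/-- Otherwise swapping `e` for `insert u X` and `insert w Y` would give a larger matching. -/
theorem not_disjoint_of_insert_mem (hM : IsMaximumMatching_s5 E M) {e X Y : Finset α} {u w : α}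
    (he : e ∈ M) (hu : u ∈ e) (hw : w ∈ e) (huw : u ≠ w)
    (hX : Disjoint X (M.biUnion id)) (hY : Disjoint Y (M.biUnion id))
    (hXne : X.Nonempty) (hYne : Y.Nonempty) (huX : insert u X ∈ E) (hwY : insert w Y ∈ E) :
    ¬ Disjoint X Y := by
  intro hXY
  have heV : e ⊆ M.biUnion id := subset_biUnion_of_mem id he
  have hother : ∀ v ∈ e, ∀ Z : Finset α, Disjoint Z (M.biUnion id) →
      ∀ f ∈ M.erase e, Disjoint (insert v Z) f := by
    intro v hv Z hZ f hf
    rw [mem_erase] at hf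
    exact disjoint_insert_left.mpr
      ⟨disjoint_left.mp (hM.pairwise_disjoint he hf.2 hf.1.symm) hv,
        hZ.mono_right (subset_biUnion_of_mem id hf.2)⟩
  have hnew : Disjoint (insert u X) (insert w Y) := by
    refine disjoint_insert_left.mpr ⟨?_, disjoint_insert_right.mpr ⟨?_, hXY⟩⟩
    · rw [mem_insert, not_or]
      exact ⟨huw, disjoint_right.mp hY (heV hu)⟩
    · exact fun hwX => disjoint_left.mp hX hwX (heV hw)
  have huX_new : insert u X ∉ insert (insert w Y) (M.erase e) := by
    rw [mem_insert, not_or]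
    exact ⟨hnew.ne (insert_ne_empty u X), fun h =>
      notMem_of_disjoint_biUnion hXne hX (subset_insert u X) (mem_of_mem_erase h)⟩
  have hwY_new : insert w Y ∉ M.erase e := fun h =>
    notMem_of_disjoint_biUnion hYne hY (subset_insert w Y) (mem_of_mem_erase h)
  have hpair : ((insert (insert u X) (insert (insert w Y) (M.erase e)) : Finset (Finset α)) :
      Set (Finset α)).Pairwise Disjoint := by
    simp only [coe_insert]
    refine ((hM.pairwise_disjoint.mono (coe_subset.mpr (erase_subset e M))).insert_of_symm
      fun f hf _ => hother w hw Y hY f hf).insert_of_symm fun f hf _ => ?_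
    rcases hf with rfl | hf
    exacts [hnew, hother u hu X hX f hf]
  have hsub : insert (insert u X) (insert (insert w Y) (M.erase e)) ⊆ E :=
    insert_subset huX (insert_subset hwY ((erase_subset e M).trans hM.subset))
  have := hM.card_le _ hsub hpair
  rw [card_insert_of_notMem huX_new, card_insert_of_notMem hwY_new,
    ← card_erase_add_one he] at this
  omega

end IsMaximumMatching_s5

theorem mem_of_card_insert_inter_eq_one {v : α} {X P : Finset α}
    (h : (insert v X ∩ P).card = 1) (hX : X ∩ P = ∅) : v ∈ P := by
  by_contra hv
  rw [insert_inter_of_notMem hv, hX, card_empty] at h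
  exact zero_ne_one h

theorem card_le_card_of_card_inter_le_one {S : Finset α} {M : Finset (Finset α)}
    (hS : S ⊆ M.biUnion id) (h : ∀ e ∈ M, (e ∩ S).card ≤ 1) : S.card ≤ M.card := by
  refine card_le_card_of_forall_subsingleton (· ∈ ·) (fun v hv => by simpa using hS hv) ?_
  intro e he v hv w hw
  exact card_le_one.mp (h e he) v (mem_inter.mpr ⟨hv.2, hv.1⟩) w (mem_inter.mpr ⟨hw.2, hw.1⟩)

theorem IsMaximumMatching_s5.card_inter_biUnion_le_one {k : ℕ}
    {E M : Finset (Finset α)} {P C : Fin k → Finset α} {A : Fin k → Fin k → Finset α}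
    (hM : IsMaximumMatching_s5 E M) (hE : ∀ e ∈ E, ∀ i, (e ∩ P i).card = 1)
    (hAfree : ∀ i j, Disjoint (A i j) (M.biUnion id)) (hAcard : ∀ i j, (A i j).card = k - 1)
    (hAdisj : ∀ i j i' j', (i, j) ≠ (i', j') → Disjoint (A i j) (A i' j'))
    (hC : ∀ j, ∀ v ∈ C j, v ∈ P j ∧ ∃ i, insert v (A i j) ∈ E) {e : Finset α} (he : e ∈ M) :
    (e ∩ univ.biUnion C).card ≤ 1 := by
  refine card_le_one.mpr fun u hu w hw => by_contra fun huw => ?_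
  simp only [mem_inter, mem_biUnion, mem_univ, true_and] at hu hw
  obtain ⟨hue, j, huC⟩ := hu
  obtain ⟨hwe, j', hwC⟩ := hw
  obtain ⟨huP, i, huA⟩ := hC j u huC
  obtain ⟨hwP, i', hwA⟩ := hC j' w hwC
  have hjj' : j ≠ j' := by
    rintro rfl
    exact huw (card_le_one.mp (hE e (hM.subset he) j).le u (mem_inter.mpr ⟨hue, huP⟩) w
      (mem_inter.mpr ⟨hwe, hwP⟩))
  have hk : 2 ≤ k := Fin.nontrivial_iff_two_le.mp ⟨⟨j, j', hjj'⟩⟩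
  have hAne : ∀ i j, (A i j).Nonempty := fun i j => card_pos.mp (by rw [hAcard]; omega)
  exact hM.not_disjoint_of_insert_mem he hue hwe huw (hAfree i j) (hAfree i' j') (hAne i j)
    (hAne i' j') huA hwA (hAdisj i j i' j' (by simp [hjj']))

theorem lt_sub_mul_of_sum_lt {ι R : Type*} [DecidableEq ι] [CommRing R] [LinearOrder R]
    [IsStrictOrderedRing R] {s : Finset ι} {a : ι → R} {c N : R} {l : ι} (hl : l ∈ s)
    (hsum : ∑ j ∈ s, a j < N) (hc : ∀ j ∈ s, c ≤ a j) : a l < N - (s.card - 1) * c := by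
  have hsplit := add_sum_erase s a hl
  have hrest : ((s.erase l).card : R) * c ≤ ∑ j ∈ s.erase l, a j := by
    simpa using card_nsmul_le_sum (s.erase l) a c fun j hj => hc j (mem_of_mem_erase hj)
  have hcard : ((s.erase l).card : R) + 1 = s.card := by exact_mod_cast card_erase_add_one hl
  rw [← hcard]
  linarith

end

theorem stmt5_general {α : Type*} [Fintype α] [DecidableEq α]
    (k n : ℕ) (hk : 1 ≤ k) (β : ℝ)
    (P : Fin k → Finset α)
    (hP : ∀ v : α, ∃! i, v ∈ P i)
    (E : Finset (Finset α))
    (hE : ∀ e ∈ E, ∀ i, (e ∩ P i).card = 1)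
    (hdeg : ∀ S : Finset α, S.card = k - 1 → (∀ i, (S ∩ P i).card ≤ 1) →
      (1 - β) * n / k < ((Finset.univ.filter (fun v => insert v S ∈ E)).card : ℝ))
    (M : Finset (Finset α)) (hME : M ⊆ E)
    (hMd : ∀ e ∈ M, ∀ f ∈ M, e ≠ f → Disjoint e f)
    (hMmax : ∀ M' ⊆ E, (∀ e ∈ M', ∀ f ∈ M', e ≠ f → Disjoint e f) → M'.card ≤ M.card)
    (hm : M.card < n)
    (A : Fin k → Fin k → Finset α)
    (hAU : ∀ i j, ∀ v ∈ A i j, v ∉ M.biUnion id)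
    (hAcard : ∀ i j, (A i j).card = k - 1)
    (hAleg : ∀ i j l, (A i j ∩ P l).card ≤ 1)
    (hAj : ∀ i j, A i j ∩ P j = ∅)
    (hAdisj : ∀ i j i' j', (i, j) ≠ (i', j') → Disjoint (A i j) (A i' j'))
    (C : Fin k → Finset α)
    (hC : ∀ j, C j = (P j).filter (fun v => ∃ i, insert v (A i j) ∈ E)) :
    (∀ e ∈ M, (e ∩ Finset.univ.biUnion C).card ≤ 1) ∧
    (∑ j, (C j).card) ≤ M.card ∧
    (∀ l, ((C l).card : ℝ) < (1 + ((k : ℝ) - 1) * β) * n / k) := by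
  have hCmem : ∀ j v, v ∈ C j ↔ v ∈ P j ∧ ∃ i, insert v (A i j) ∈ E := by simp [hC]
  have hM : IsMaximumMatching_s5 E M := ⟨hME, fun e he f hf => hMd e he f hf,
    fun M' hM'E hM'd => hMmax M' hM'E fun e he f hf => hM'd he hf⟩
  have hAfree : ∀ i j, Disjoint (A i j) (M.biUnion id) := fun i j => disjoint_left.mpr (hAU i j)
  have hCM : ∀ e ∈ M, (e ∩ univ.biUnion C).card ≤ 1 := fun e he =>
    hM.card_inter_biUnion_le_one hE hAfree hAcard hAdisj (fun j v => (hCmem j v).mp) he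
  have hCdisj : ((univ : Finset (Fin k)) : Set (Fin k)).PairwiseDisjoint C :=
    fun j _ j' _ hjj' => disjoint_left.mpr fun v hj hj' =>
      hjj' ((hP v).unique ((hCmem j v).mp hj).1 ((hCmem j' v).mp hj').1)
  have hsum : ∑ j, (C j).card ≤ M.card := by
    rw [← card_biUnion hCdisj]
    refine card_le_card_of_card_inter_le_one (biUnion_subset.mpr fun j _ v hv => ?_) hCM
    obtain ⟨_, i, hvA⟩ := (hCmem j v).mp hv
    exact hM.mem_biUnion_of_insert_mem (hAfree i j) hvA
  have hlow : ∀ j, (1 - β) * n / k < (C j).card := fun j =>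
    (hdeg _ (hAcard ⟨0, hk⟩ j) (hAleg _ j)).trans_le <| by
      refine Nat.cast_le.mpr (card_le_card fun v hv => (hCmem j v).mpr ?_)
      rw [mem_filter] at hv
      exact ⟨mem_of_card_insert_inter_eq_one (hE _ hv.2 j) (hAj _ j), _, hv.2⟩
  refine ⟨hCM, hsum, fun l => ?_⟩
  have hsumR : ∑ j, ((C j).card : ℝ) < n := by exact_mod_cast hsum.trans_lt hm
  calc ((C l).card : ℝ) < n - ((univ : Finset (Fin k)).card - 1) * ((1 - β) * n / k) :=
        lt_sub_mul_of_sum_lt (mem_univ l) hsumR fun j _ => (hlow j).le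
    _ = (1 + ((k : ℝ) - 1) * β) * n / k := by
        rw [card_univ, Fintype.card_fin]
        field_simp
        ring

/-- In the setting of Lemma 3's proof: with a maximum matching M of size
m < n and k² disjoint legal (k-1)-sets A_i^j in U = V(H) - V(M) with A_i^j ∩ V_j = ∅,
and C_j = {v ∈ V_j : A_i^j ∪ {v} ∈ E for some i}: every edge of M contains at most one
vertex of C = ⋃_j C_j, hence Σ_j |C_j| ≤ m, and |C_l| < (1+(k-1)β)n/k for every l. -/
theorem stmt5 {α : Type*} [Fintype α] [DecidableEq α]
    (k n : ℕ) (hk : 1 ≤ k) (β : ℝ) (hβ0 : 0 < β) (hβ1 : β < 1 / (2 * (k : ℝ)^2))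
    (P : Fin k → Finset α)
    (hP : ∀ v : α, ∃! i, v ∈ P i)
    (hPcard : ∀ i, (P i).card = n)
    (E : Finset (Finset α))
    (hE : ∀ e ∈ E, ∀ i, (e ∩ P i).card = 1)
    (hdeg : ∀ S : Finset α, S.card = k - 1 → (∀ i, (S ∩ P i).card ≤ 1) →
      (1 - β) * n / k < ((Finset.univ.filter (fun v => insert v S ∈ E)).card : ℝ))
    (M : Finset (Finset α)) (hME : M ⊆ E)
    (hMd : ∀ e ∈ M, ∀ f ∈ M, e ≠ f → Disjoint e f)
    (hMmax : ∀ M' ⊆ E, (∀ e ∈ M', ∀ f ∈ M', e ≠ f → Disjoint e f) → M'.card ≤ M.card)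
    (hm : M.card < n)
    (A : Fin k → Fin k → Finset α)
    (hAU : ∀ i j, ∀ v ∈ A i j, v ∉ M.biUnion id)
    (hAcard : ∀ i j, (A i j).card = k - 1)
    (hAleg : ∀ i j l, (A i j ∩ P l).card ≤ 1)
    (hAj : ∀ i j, A i j ∩ P j = ∅)
    (hAdisj : ∀ i j i' j', (i, j) ≠ (i', j') → Disjoint (A i j) (A i' j'))
    (C : Fin k → Finset α)
    (hC : ∀ j, C j = (P j).filter (fun v => ∃ i, insert v (A i j) ∈ E)) :
    (∀ e ∈ M, (e ∩ Finset.univ.biUnion C).card ≤ 1) ∧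
    (∑ j, (C j).card) ≤ M.card ∧
    (∀ l, ((C l).card : ℝ) < (1 + ((k : ℝ) - 1) * β) * n / k) :=
  stmt5_general k n hk β P hP E hE hdeg M hME hMd hMmax hm A hAU hAcard hAleg hAj hAdisj C hC
end

section
/- With C_j and D_j as defined from k disjoint legal (k-1)-sets A_1^j, ..., A_k^j missing class V_j (D_j the vertices extending all of them, C_j those extending at least one), the double counting inequality Σ_{i=1}^k d_H(A_i^j) ≤ |D_j| + (k-1)|C_j| holds; hence if δ_{k-1}(H) > (1-β)n/k and |C_j| < (1+(k-1)β)n/k, then |D_j| > (1 - k²β)n/k. -/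
/-- With A_1^j,...,A_k^j disjoint legal (k-1)-sets missing class V_j,
C_j the vertices extending at least one of them and D_j those extending all of them,
one has Σ_i d_H(A_i^j) ≤ |D_j| + (k-1)|C_j|; hence if δ_{k-1}(H) > (1-β)n/k and
|C_j| < (1+(k-1)β)n/k, then |D_j| > (1-k²β)n/k. -/
theorem stmt6 {α : Type*} [Fintype α] [DecidableEq α]
    (k n : ℕ) (hk : 1 ≤ k) (hn : 1 ≤ n) (β : ℝ) (hβ0 : 0 < β) (hβ1 : β < 1 / (2 * (k : ℝ)^2))
    (P : Fin k → Finset α)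
    (hP : ∀ v : α, ∃! i, v ∈ P i)
    (hPcard : ∀ i, (P i).card = n)
    (E : Finset (Finset α))
    (hE : ∀ e ∈ E, ∀ i, (e ∩ P i).card = 1)
    (j : Fin k)
    (A : Fin k → Finset α)
    (hAcard : ∀ i, (A i).card = k - 1)
    (hAleg : ∀ i l, (A i ∩ P l).card ≤ 1)
    (hAj : ∀ i, A i ∩ P j = ∅)
    (hAdisj : ∀ i i', i ≠ i' → Disjoint (A i) (A i'))
    (C D : Finset α)
    (hC : C = (P j).filter (fun v => ∃ i, insert v (A i) ∈ E))
    (hD : D = (P j).filter (fun v => ∀ i, insert v (A i) ∈ E)) :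
    (∑ i, (Finset.univ.filter (fun v => insert v (A i) ∈ E)).card)
        ≤ D.card + (k - 1) * C.card ∧
    ((∀ S : Finset α, S.card = k - 1 → (∀ l, (S ∩ P l).card ≤ 1) →
        (1 - β) * n / k < ((Finset.univ.filter (fun v => insert v S ∈ E)).card : ℝ)) →
      (C.card : ℝ) < (1 + ((k : ℝ) - 1) * β) * n / k →
      (1 - (k : ℝ)^2 * β) * n / k < (D.card : ℝ)) := by
  classical
  -- any vertex extending some A i lies in P j
  have hmem : ∀ (i : Fin k) (v : α), insert v (A i) ∈ E → v ∈ P j := by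
    intro i v hv
    by_contra hvj
    have h1 := hE _ hv j
    rw [Finset.insert_inter_of_notMem hvj, hAj i] at h1
    simp at h1
  have hDC : D ⊆ C := by
    rw [hC, hD]
    intro v hv
    rw [Finset.mem_filter] at hv ⊢
    exact ⟨hv.1, ⟨⟨0, hk⟩, hv.2 _⟩⟩
  set g : α → ℕ := fun v => (Finset.univ.filter (fun i : Fin k => insert v (A i) ∈ E)).card
    with hg
  have hswap : (∑ i, (Finset.univ.filter (fun v => insert v (A i) ∈ E)).card)
      = ∑ v ∈ C, g v := by
    have h1 : (∑ i, (Finset.univ.filter (fun v => insert v (A i) ∈ E)).card)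
        = ∑ v : α, g v := by
      simp only [hg, Finset.card_filter]
      rw [Finset.sum_comm]
    rw [h1]
    refine (Finset.sum_subset (Finset.subset_univ C) ?_).symm
    intro x _ hx
    simp only [hg, Finset.card_eq_zero, Finset.filter_eq_empty_iff, Finset.mem_univ,
      forall_true_left]
    intro i hi
    exact hx (by rw [hC]; exact Finset.mem_filter.2 ⟨hmem i x hi, ⟨i, hi⟩⟩)
  have part1 : (∑ i, (Finset.univ.filter (fun v => insert v (A i) ∈ E)).card)
      ≤ D.card + (k - 1) * C.card := by
    rw [hswap]
    have hsplit : ∑ v ∈ C, g v = ∑ v ∈ C \ D, g v + ∑ v ∈ D, g v :=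
      (Finset.sum_sdiff hDC).symm
    have hbD : ∑ v ∈ D, g v ≤ k * D.card := by
      rw [mul_comm]
      refine Finset.sum_le_card_nsmul _ _ _ ?_
      intro v _
      simpa [hg] using (Finset.card_filter_le Finset.univ _).trans (by simp)
    have hbCD : ∑ v ∈ C \ D, g v ≤ (k - 1) * (C \ D).card := by
      rw [mul_comm]
      refine Finset.sum_le_card_nsmul _ _ _ ?_
      intro v hv
      have hvC : v ∈ C := (Finset.mem_sdiff.1 hv).1
      have hvD : v ∉ D := (Finset.mem_sdiff.1 hv).2
      have hvPj : v ∈ P j := by rw [hC] at hvC; exact (Finset.mem_filter.1 hvC).1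
      have : ¬ ∀ i, insert v (A i) ∈ E := by
        intro h
        exact hvD (by rw [hD]; exact Finset.mem_filter.2 ⟨hvPj, h⟩)
      push_neg at this
      obtain ⟨i0, hi0⟩ := this
      have hlt : (Finset.univ.filter (fun i : Fin k => insert v (A i) ∈ E)).card < k := by
        have hss : Finset.univ.filter (fun i : Fin k => insert v (A i) ∈ E) ⊂ Finset.univ :=
          Finset.filter_ssubset.2 ⟨i0, Finset.mem_univ _, hi0⟩
        simpa using Finset.card_lt_card hss
      simpa [hg] using Nat.le_sub_one_of_lt hlt
    have hcd : (C \ D).card = C.card - D.card := Finset.card_sdiff_of_subset hDC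
    have hdc : D.card ≤ C.card := Finset.card_le_card hDC
    calc ∑ v ∈ C, g v ≤ (k - 1) * (C \ D).card + k * D.card := by
          rw [hsplit]; exact Nat.add_le_add hbCD hbD
      _ = D.card + (k - 1) * C.card := by
          obtain ⟨m, rfl⟩ : ∃ m, k = m + 1 := ⟨k - 1, by omega⟩
          rw [hcd]
          simp only [Nat.add_sub_cancel]
          have h2 : C.card - D.card + D.card = C.card := Nat.sub_add_cancel hdc
          calc m * (C.card - D.card) + (m + 1) * D.card
              = m * ((C.card - D.card) + D.card) + D.card := by ring
            _ = D.card + m * C.card := by rw [h2]; ring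
  refine ⟨part1, ?_⟩
  intro hδ hCsmall
  have hk0 : (0 : ℝ) < (k : ℝ) := by exact_mod_cast hk
  have hk1 : (1 : ℝ) ≤ (k : ℝ) := by exact_mod_cast hk
  have hn0 : (0 : ℝ) ≤ (n : ℝ) := Nat.cast_nonneg n
  -- lower bound on the sum
  have hsum : (k : ℝ) * ((1 - β) * n / k)
      < ∑ i, ((Finset.univ.filter (fun v => insert v (A i) ∈ E)).card : ℝ) := by
    have : ∀ i : Fin k, (1 - β) * n / k
        < ((Finset.univ.filter (fun v => insert v (A i) ∈ E)).card : ℝ) :=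
      fun i => hδ (A i) (hAcard i) (hAleg i)
    calc (k : ℝ) * ((1 - β) * n / k) = ∑ _i : Fin k, (1 - β) * n / k := by
          simp [Finset.sum_const, mul_comm]
      _ < _ := Finset.sum_lt_sum_of_nonempty ⟨⟨0, hk⟩, Finset.mem_univ _⟩ (fun i _ => this i)
  have hpart1R : (∑ i, ((Finset.univ.filter (fun v => insert v (A i) ∈ E)).card : ℝ))
      ≤ (D.card : ℝ) + ((k : ℝ) - 1) * C.card := by
    have := part1
    have h := (Nat.cast_le (α := ℝ)).2 this
    push_cast [Nat.cast_sub hk] at h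
    exact h
  have hcancel : (k : ℝ) * ((1 - β) * n / k) = (1 - β) * n := by
    field_simp
  rw [hcancel] at hsum
  rw [div_lt_iff₀ hk0]
  rw [lt_div_iff₀ hk0] at hCsmall
  nlinarith [mul_nonneg (mul_nonneg hβ0.le hn0) (sub_nonneg.2 hk1),
    mul_nonneg (sub_nonneg.2 hk1) (sub_nonneg.2 hk1), hsum, hpart1R,
    mul_le_mul_of_nonneg_right hpart1R hk0.le,
    mul_lt_mul_of_pos_left hCsmall (show (0:ℝ) < (k:ℝ) - 1 + 1 by linarith)]
end

section
/- Let 0 < c < 1, k ≥ 3, and n sufficiently large. Let H be a k-partite k-graph with classes V_1,...,V_k of size n. Suppose there are three distinct indices r, s, t ∈ [k] such that every legal (k-1)-set avoiding class V_i has degree at least cn, for each i ∈ {r, s, t}. Then for every (k+1)-set S of type j with j ∈ {r, s, t}, the number of S-absorbing edges of H is at least c³nᵏ/2. -/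
open Finset

section auxstmt7
variable {α : Type} [DecidableEq α] {k : ℕ} {P : Fin k → Finset α}

omit [DecidableEq α] in
lemma aux_injOn7 (hP : ∀ v : α, ∃! i, v ∈ P i) {I : Finset (Fin k)} {g : Fin k → α}
    (hg : ∀ i ∈ I, g i ∈ P i) : Set.InjOn g I := by
  intro i hi i' hi' h
  exact (hP (g i)).unique (hg i hi) (by rw [h]; exact hg i' hi')

lemma aux_card7 (hP : ∀ v : α, ∃! i, v ∈ P i) {I : Finset (Fin k)} {g : Fin k → α}
    (hg : ∀ i ∈ I, g i ∈ P i) : (I.image g).card = I.card :=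
  Finset.card_image_of_injOn (aux_injOn7 hP hg)

lemma aux_inter7 (hP : ∀ v : α, ∃! i, v ∈ P i) {I : Finset (Fin k)} {g : Fin k → α}
    (hg : ∀ i ∈ I, g i ∈ P i) {l : Fin k} (hl : l ∈ I) :
    (I.image g) ∩ P l = {g l} := by
  ext u
  simp only [mem_inter, mem_image, mem_singleton]
  constructor
  · rintro ⟨⟨i, hi, rfl⟩, hu⟩
    have : i = l := (hP (g i)).unique (hg i hi) hu
    rw [this]
  · rintro rfl
    exact ⟨⟨l, hl, rfl⟩, hg l hl⟩

lemma aux_inter_empty7 (hP : ∀ v : α, ∃! i, v ∈ P i) {I : Finset (Fin k)} {g : Fin k → α}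
    (hg : ∀ i ∈ I, g i ∈ P i) {l : Fin k} (hl : l ∉ I) :
    (I.image g) ∩ P l = ∅ := by
  ext u
  simp only [mem_inter, mem_image, Finset.notMem_empty, iff_false, not_and]
  rintro ⟨i, hi, rfl⟩ hu
  have : l = i := (hP (g i)).unique hu (hg i hi)
  exact hl (this ▸ hi)

lemma aux_sdiff7 (hP : ∀ v : α, ∃! i, v ∈ P i) {I : Finset (Fin k)} {g : Fin k → α}
    (hg : ∀ i ∈ I, g i ∈ P i) (l : Fin k) :
    (I.image g) \ P l = (I.erase l).image g := by
  ext u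
  simp only [mem_sdiff, mem_image, mem_erase]
  constructor
  · rintro ⟨⟨i, hi, rfl⟩, hu⟩
    exact ⟨i, ⟨fun h => hu (h ▸ hg i hi), hi⟩, rfl⟩
  · rintro ⟨i, ⟨hne, hi⟩, rfl⟩
    exact ⟨⟨i, hi, rfl⟩, fun h => hne ((hP (g i)).unique (hg i hi) h)⟩

lemma aux_union_singleton7 {α : Type} [DecidableEq α] (s : Finset α) (a : α) :
    s ∪ {a} = insert a s := by
  ext u; simp [or_comm]

end auxstmt7

lemma aux_arith7 (k : ℕ) (hk : 3 ≤ k) (c : ℝ) (hc0 : 0 < c) (hc1 : c < 1)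
    (n : ℕ) (hn : 2*k*(k+1)/c ≤ (n:ℝ)) :
    c^3 * (n:ℝ)^k / 2 ≤ ((n:ℝ) - 1)^(k-3) * (c*n - (k+1))^3 := by
  have hk3 : (3:ℝ) ≤ (k:ℝ) := by exact_mod_cast hk
  set δ : ℝ := (k+1)/c with hδdef
  have hδpos : 0 < δ := by positivity
  have hδ1 : 1 ≤ δ := by
    rw [hδdef, le_div_iff₀ hc0]
    nlinarith
  have hcn : 2*k*(k+1) ≤ c * n := by
    rw [div_le_iff₀ hc0] at hn
    nlinarith
  have hnpos : (0:ℝ) < n := by nlinarith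
  have h2kδ : 2*(k:ℝ)*δ ≤ n := by
    rw [hδdef, ← mul_div_assoc]
    exact hn
  have hnδ : 0 ≤ (n:ℝ) - δ := by nlinarith
  have hm : c*(n:ℝ) - (k+1) = c * ((n:ℝ) - δ) := by
    rw [hδdef]; field_simp
  have hber : (1:ℝ)/2 ≤ (1 - δ/(n:ℝ))^k := by
    have h1 : (-2:ℝ) ≤ -δ/(n:ℝ) := by
      rw [neg_div, neg_le_neg_iff]
      rw [div_le_iff₀ hnpos]
      nlinarith
    have := one_add_mul_le_pow h1 k
    have h2 : δ/(n:ℝ) * k ≤ 1/2 := by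
      rw [div_mul_eq_mul_div, div_le_iff₀ hnpos]
      nlinarith
    calc (1:ℝ)/2 ≤ 1 + (k:ℝ) * (-δ/(n:ℝ)) := by
          have hre : (k:ℝ) * (-δ/(n:ℝ)) = -(δ/(n:ℝ) * (k:ℝ)) := by ring
          rw [hre]; linarith
      _ ≤ (1 + -δ/(n:ℝ))^k := this
      _ = (1 - δ/(n:ℝ))^k := by ring_nf
  have hkey : (n:ℝ)^k / 2 ≤ ((n:ℝ) - δ)^k := by
    have : ((n:ℝ) - δ) = (n:ℝ) * (1 - δ/(n:ℝ)) := by field_simp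
    rw [this, mul_pow]
    have hnk : (0:ℝ) ≤ (n:ℝ)^k := by positivity
    calc (n:ℝ)^k / 2 = (n:ℝ)^k * (1/2) := by ring
      _ ≤ (n:ℝ)^k * (1 - δ/(n:ℝ))^k := by
          exact mul_le_mul_of_nonneg_left hber hnk
  have hsplit : ((n:ℝ) - δ)^k = ((n:ℝ) - δ)^(k-3) * ((n:ℝ) - δ)^3 := by
    rw [← pow_add]
    congr 1
    omega
  have hstep : ((n:ℝ) - δ)^(k-3) ≤ ((n:ℝ) - 1)^(k-3) :=
    pow_le_pow_left₀ hnδ (by linarith) _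
  calc c^3 * (n:ℝ)^k / 2 = c^3 * ((n:ℝ)^k/2) := by ring
    _ ≤ c^3 * ((n:ℝ) - δ)^k := by
        exact mul_le_mul_of_nonneg_left hkey (by positivity)
    _ = ((n:ℝ) - δ)^(k-3) * (c * ((n:ℝ) - δ))^3 := by
        rw [hsplit]; ring
    _ ≤ ((n:ℝ) - 1)^(k-3) * (c * ((n:ℝ) - δ))^3 := by
        apply mul_le_mul_of_nonneg_right hstep
        positivity
    _ = ((n:ℝ) - 1)^(k-3) * (c*(n:ℝ) - (k+1))^3 := by rw [hm]

/-- If every legal (k-1)-set avoiding class V_i has degree ≥ cn for each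
i ∈ {r,s,t} (three distinct indices), then for every (k+1)-set S of type j with
j ∈ {r,s,t}, the number of S-absorbing edges is at least c³nᵏ/2. -/
theorem stmt7 (k : ℕ) (hk : 3 ≤ k) (c : ℝ) (hc0 : 0 < c) (hc1 : c < 1) :
    ∃ n0 : ℕ, ∀ n : ℕ, n0 ≤ n →
    ∀ (α : Type) [Fintype α] [DecidableEq α],
    ∀ P : Fin k → Finset α,
    (∀ v : α, ∃! i, v ∈ P i) →
    (∀ i, (P i).card = n) →
    ∀ E : Finset (Finset α),
    (∀ e ∈ E, ∀ i, (e ∩ P i).card = 1) →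
    ∀ r s t : Fin k, r ≠ s → r ≠ t → s ≠ t →
    (∀ i ∈ ({r, s, t} : Finset (Fin k)), ∀ S : Finset α, S.card = k - 1 →
      (∀ l, (S ∩ P l).card ≤ 1) → S ∩ P i = ∅ →
      c * n ≤ ((Finset.univ.filter (fun v => insert v S ∈ E)).card : ℝ)) →
    ∀ j ∈ ({r, s, t} : Finset (Fin k)), ∀ S : Finset α,
    (S ∩ P j).card = 2 → (∀ i, i ≠ j → (S ∩ P i).card = 1) →
    c^3 * (n : ℝ)^k / 2 ≤ ((E.filter (fun e =>
        Disjoint e S ∧ ∃ r' : Fin k, r' ≠ j ∧ ∃ v ∈ S ∩ P j,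
          ((S \ {v}) \ P r' ∪ (e ∩ P r')) ∈ E ∧
          (((e \ P j) \ P r') ∪ {v} ∪ (S ∩ P r')) ∈ E)).card : ℝ) := by
  classical
  refine ⟨⌈2*(k:ℝ)*((k:ℝ)+1)/c⌉₊ + 1, ?_⟩
  intro n hn α _ _ P hP hPn E hE r s t hrs hrt hst hdeg j hj S hS2 hS1
  -- numeric facts
  have hn1 : 1 ≤ n := by omega
  have hnR : 2*(k:ℝ)*((k:ℝ)+1)/c ≤ (n:ℝ) := by
    calc 2*(k:ℝ)*((k:ℝ)+1)/c ≤ (⌈2*(k:ℝ)*((k:ℝ)+1)/c⌉₊ : ℝ) := Nat.le_ceil _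
      _ ≤ (n:ℝ) := by exact_mod_cast Nat.le_of_succ_le hn
  have hk3R : (3:ℝ) ≤ (k:ℝ) := by exact_mod_cast hk
  have hcn : 2*(k:ℝ)*((k:ℝ)+1) ≤ c * n := by
    rw [div_le_iff₀ hc0] at hnR
    nlinarith
  -- extract the two vertices of S in class j
  obtain ⟨v, v', hvne, hSj⟩ := Finset.card_eq_two.mp hS2
  have hxex : ∀ i : Fin k, ∃ u, i ≠ j → S ∩ P i = {u} := by
    intro i
    by_cases hi : i = j
    · exact ⟨v, fun h => absurd hi h⟩
    · obtain ⟨u, hu⟩ := Finset.card_eq_one.mp (hS1 i hi)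
      exact ⟨u, fun _ => hu⟩
  choose x hxS using hxex
  have hvmem : v ∈ S ∩ P j := by rw [hSj]; exact mem_insert_self _ _
  have hv'mem : v' ∈ S ∩ P j := by rw [hSj]; exact mem_insert_of_mem (mem_singleton_self _)
  have hxmem : ∀ i, i ≠ j → x i ∈ S ∩ P i := fun i hi => by
    rw [hxS i hi]; exact mem_singleton_self _
  have hvS : v ∈ S := (mem_inter.mp hvmem).1
  have hvP : v ∈ P j := (mem_inter.mp hvmem).2
  have hv'S : v' ∈ S := (mem_inter.mp hv'mem).1
  have hv'P : v' ∈ P j := (mem_inter.mp hv'mem).2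
  -- pick the two other special indices a b
  obtain ⟨a, b, haR, hbR, hab, haj, hbj⟩ :
      ∃ a b : Fin k, a ∈ ({r,s,t}:Finset (Fin k)) ∧ b ∈ ({r,s,t}:Finset (Fin k)) ∧
        a ≠ b ∧ a ≠ j ∧ b ≠ j := by
    have hj' := hj
    simp only [mem_insert, mem_singleton] at hj'
    rcases hj' with rfl | rfl | rfl
    · exact ⟨s, t, by simp, by simp, hst, Ne.symm hrs, Ne.symm hrt⟩
    · exact ⟨r, t, by simp, by simp, hrt, hrs, Ne.symm hst⟩
    · exact ⟨r, s, by simp, by simp, hrs, hrt, hst⟩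
  -- the canonical function xh describing S minus v
  set xh : Fin k → α := fun i => if i = j then v' else x i with hxhdef
  have hxhP : ∀ i, xh i ∈ P i := by
    intro i
    by_cases hij : i = j
    · rw [show xh i = v' from by simp [hxhdef, hij], hij]; exact hv'P
    · rw [show xh i = x i from by simp [hxhdef, hij]]
      exact (mem_inter.mp (hxmem i hij)).2
  have hvnotim : v ∉ univ.image xh := by
    intro hvim
    obtain ⟨i, -, hi⟩ := mem_image.mp hvim
    by_cases hij : i = j
    · rw [show xh i = v' from by simp [hxhdef, hij]] at hi
      exact hvne hi.symm
    · rw [show xh i = x i from by simp [hxhdef, hij]] at hi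
      have h1 : v ∈ P i := hi ▸ (mem_inter.mp (hxmem i hij)).2
      exact hij ((hP v).unique h1 hvP)
  have hSeq : S = insert v (univ.image xh) := by
    ext u
    simp only [mem_insert, mem_image, mem_univ, true_and]
    constructor
    · intro hu
      obtain ⟨i, hi, -⟩ := hP u
      by_cases hij : i = j
      · rw [hij] at hi
        have h1 : u ∈ S ∩ P j := mem_inter.mpr ⟨hu, hi⟩
        rw [hSj] at h1
        rcases mem_insert.mp h1 with h2 | h2
        · left; exact h2
        · right
          refine ⟨j, ?_⟩
          rw [show xh j = v' from by simp [hxhdef]]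
          exact (mem_singleton.mp h2).symm
      · have h1 : u ∈ S ∩ P i := mem_inter.mpr ⟨hu, hi⟩
        rw [hxS i hij] at h1
        right
        refine ⟨i, ?_⟩
        rw [show xh i = x i from by simp [hxhdef, hij]]
        exact (mem_singleton.mp h1).symm
    · rintro (rfl | ⟨i, rfl⟩)
      · exact hvS
      · by_cases hij : i = j
        · rw [show xh i = v' from by simp [hxhdef, hij]]; exact hv'S
        · rw [show xh i = x i from by simp [hxhdef, hij]]
          exact (mem_inter.mp (hxmem i hij)).1
  have hScard : S.card = k + 1 := by
    rw [hSeq, card_insert_of_notMem hvnotim,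
      aux_card7 hP (fun i _ => hxhP i), card_univ, Fintype.card_fin]
  have hSv : S \ {v} = univ.image xh := by
    rw [hSeq, Finset.sdiff_singleton_eq_erase, Finset.erase_insert hvnotim]
  have hSva : (S \ {v}) \ P a = (univ.erase a).image xh := by
    rw [hSv, aux_sdiff7 hP (fun i _ => hxhP i) a]
  -- the real bound m
  set m : ℝ := c*(n:ℝ) - ((k:ℝ)+1) with hmdef
  have hm0 : 0 ≤ m := by rw [hmdef]; nlinarith
  -- generic degree extraction
  have hdegW : ∀ i ∈ ({r,s,t}:Finset (Fin k)), ∀ g : Fin k → α, (∀ l, l ≠ i → g l ∈ P l) →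
      m ≤ ((((P i).filter (fun u => insert u ((univ.erase i).image g) ∈ E)) \ S).card : ℝ) := by
    intro i hi g hg
    set S' := (univ.erase i).image g with hS'def
    have hgI : ∀ l ∈ univ.erase i, g l ∈ P l := fun l hl => hg l (mem_erase.mp hl).1
    have hcardS' : S'.card = k - 1 := by
      rw [hS'def, aux_card7 hP hgI, card_erase_of_mem (mem_univ i), card_univ, Fintype.card_fin]
    have hlegal : ∀ l, (S' ∩ P l).card ≤ 1 := by
      intro l
      by_cases hl : l ∈ univ.erase i
      · rw [hS'def, aux_inter7 hP hgI hl]; simp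
      · rw [hS'def, aux_inter_empty7 hP hgI hl]; simp
    have havoid : S' ∩ P i = ∅ := by
      rw [hS'def]
      exact aux_inter_empty7 hP hgI (notMem_erase i univ)
    have hd := hdeg i hi S' hcardS' hlegal havoid
    have heqf : (univ.filter (fun u => insert u S' ∈ E)) =
        (P i).filter (fun u => insert u S' ∈ E) := by
      apply Finset.Subset.antisymm
      · intro u hu
        rw [mem_filter] at hu ⊢
        refine ⟨?_, hu.2⟩
        by_contra hui
        have h1 := hE _ hu.2 i
        rw [Finset.insert_inter_of_notMem hui, havoid] at h1
        simp at h1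
      · intro u hu
        rw [mem_filter] at hu ⊢
        exact ⟨mem_univ u, hu.2⟩
    rw [heqf] at hd
    have h2 := Finset.card_le_card_sdiff_add_card
      (s := (P i).filter (fun u => insert u S' ∈ E)) (t := S)
    rw [hScard] at h2
    have h2' : (((P i).filter (fun u => insert u S' ∈ E)).card : ℝ) ≤
        ((((P i).filter (fun u => insert u S' ∈ E)) \ S).card : ℝ) + ((k:ℝ)+1) := by
      exact_mod_cast h2
    rw [hmdef]
    linarith
  -- free indices and the collection A of free choices
  set free : Finset (Fin k) := univ \ {j, a, b} with hfreedef
  have hmemfree : ∀ i, i ∈ free ↔ (i ≠ j ∧ i ≠ a ∧ i ≠ b) := by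
    intro i
    simp [hfreedef, not_or]
  have hfreecard : free.card = k - 3 := by
    have h3 : ({j,a,b} : Finset (Fin k)).card = 3 := by
      rw [card_insert_of_notMem (by simp [Ne.symm haj, Ne.symm hbj]),
        card_insert_of_notMem (by simp [hab]), card_singleton]
    rw [hfreedef, card_sdiff_of_subset (subset_univ _), card_univ, Fintype.card_fin, h3]
  set A : Finset (Fin k → α) :=
    Fintype.piFinset (fun i => if i ∈ free then P i \ S else ({v} : Finset α)) with hAdef
  have hAmem : ∀ y0 ∈ A, (∀ i ∈ free, y0 i ∈ P i \ S) ∧ (∀ i, i ∉ free → y0 i = v) := by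
    intro y0 hy0
    rw [hAdef, Fintype.mem_piFinset] at hy0
    constructor
    · intro i hi; have h1 := hy0 i; rwa [if_pos hi] at h1
    · intro i hi; have h1 := hy0 i; rw [if_neg hi] at h1; exact mem_singleton.mp h1
  have hAcard : A.card = (n-1)^(k-3) := by
    rw [hAdef, Fintype.card_piFinset]
    have hcc : ∀ i, (if i ∈ free then P i \ S else ({v}:Finset α)).card =
        if i ∈ free then n-1 else 1 := by
      intro i
      by_cases hi : i ∈ free
      · rw [if_pos hi, if_pos hi]
        have hij : i ≠ j := ((hmemfree i).mp hi).1
        have hip : P i ∩ S = {x i} := by rw [inter_comm]; exact hxS i hij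
        have h := Finset.card_inter_add_card_sdiff (P i) S
        rw [hip, card_singleton, hPn i] at h
        omega
      · rw [if_neg hi, if_neg hi, card_singleton]
    simp_rw [hcc]
    rw [Finset.prod_ite_mem, univ_inter, prod_const, hfreecard]
  -- the three selection sets
  set zax : (Fin k → α) → Fin k → α :=
    fun y0 i => if i = j then v else if i = a then x a else y0 i with hzaxdef
  set B : (Fin k → α) → Finset α :=
    fun y0 => ((P b).filter (fun u => insert u ((univ.erase b).image (zax y0)) ∈ E)) \ S with hBdef
  set Cset : Finset α :=
    ((P a).filter (fun u => insert u ((univ.erase a).image xh) ∈ E)) \ S with hCdef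
  set yab : (Fin k → α) → α → α → Fin k → α :=
    fun y0 ub ua i => if i = a then ua else if i = b then ub else y0 i with hyabdef
  set D : (Fin k → α) → α → α → Finset α :=
    fun y0 ub ua =>
      ((P j).filter (fun u => insert u ((univ.erase j).image (yab y0 ub ua)) ∈ E)) \ S with hDdef
  have hBsub : ∀ y0 ub, ub ∈ B y0 →
      ub ∈ P b ∧ ub ∉ S ∧ insert ub ((univ.erase b).image (zax y0)) ∈ E := by
    intro y0 ub hub
    simp only [hBdef, mem_sdiff, mem_filter] at hub
    exact ⟨hub.1.1, hub.2, hub.1.2⟩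
  have hCsub : ∀ ua, ua ∈ Cset →
      ua ∈ P a ∧ ua ∉ S ∧ insert ua ((univ.erase a).image xh) ∈ E := by
    intro ua hua
    simp only [hCdef, mem_sdiff, mem_filter] at hua
    exact ⟨hua.1.1, hua.2, hua.1.2⟩
  have hDsub : ∀ y0 ub ua w, w ∈ D y0 ub ua →
      w ∈ P j ∧ w ∉ S ∧ insert w ((univ.erase j).image (yab y0 ub ua)) ∈ E := by
    intro y0 ub ua w hw
    simp only [hDdef, mem_sdiff, mem_filter] at hw
    exact ⟨hw.1.1, hw.2, hw.1.2⟩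
  -- the degree lower bounds
  have hB : ∀ y0 ∈ A, m ≤ ((B y0).card : ℝ) := by
    intro y0 hy0
    have hmemb : ∀ l, l ≠ b → zax y0 l ∈ P l := by
      intro l hl
      by_cases h1 : l = j
      · rw [show zax y0 l = v from by simp [hzaxdef, h1], h1]; exact hvP
      · by_cases h2 : l = a
        · rw [show zax y0 l = x a from by simp [hzaxdef, h1, h2, haj], h2]
          exact (mem_inter.mp (hxmem a haj)).2
        · rw [show zax y0 l = y0 l from by simp [hzaxdef, h1, h2]]
          exact (mem_sdiff.mp ((hAmem y0 hy0).1 l ((hmemfree l).mpr ⟨h1, h2, hl⟩))).1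
    have hres := hdegW b hbR (zax y0) hmemb
    simpa only [hBdef] using hres
  have hC : m ≤ (Cset.card : ℝ) := by
    have hres := hdegW a haR xh (fun l _ => hxhP l)
    simpa only [hCdef] using hres
  have hD : ∀ y0 ∈ A, ∀ ub ∈ B y0, ∀ ua ∈ Cset, m ≤ ((D y0 ub ua).card : ℝ) := by
    intro y0 hy0 ub hub ua hua
    have hB' := hBsub y0 ub hub
    have hC' := hCsub ua hua
    have hmemb : ∀ l, l ≠ j → yab y0 ub ua l ∈ P l := by
      intro l hl
      by_cases h2 : l = a
      · rw [show yab y0 ub ua l = ua from by simp [hyabdef, h2], h2]; exact hC'.1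
      · by_cases h3 : l = b
        · rw [show yab y0 ub ua l = ub from by simp [hyabdef, h2, h3, Ne.symm hab], h3]; exact hB'.1
        · rw [show yab y0 ub ua l = y0 l from by simp [hyabdef, h2, h3]]
          exact (mem_sdiff.mp ((hAmem y0 hy0).1 l ((hmemfree l).mpr ⟨hl, h2, h3⟩))).1
    have hres := hdegW j hj (yab y0 ub ua) hmemb
    simpa only [hDdef] using hres
  -- the full vertex selector
  set yfull : (Fin k → α) → α → α → α → Fin k → α :=
    fun y0 ub ua w i => if i = j then w else yab y0 ub ua i with hyfulldef
  have hyj : ∀ y0 ub ua w, yfull y0 ub ua w j = w := by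
    intro y0 ub ua w; simp [hyfulldef]
  have hya : ∀ y0 ub ua w, yfull y0 ub ua w a = ua := by
    intro y0 ub ua w; simp [hyfulldef, hyabdef, haj]
  have hyb : ∀ y0 ub ua w, yfull y0 ub ua w b = ub := by
    intro y0 ub ua w
    simp [hyfulldef, hyabdef, hbj, Ne.symm hab]
  have hyfree : ∀ y0 ub ua w i, i ≠ j → i ≠ a → i ≠ b → yfull y0 ub ua w i = y0 i := by
    intro y0 ub ua w i h1 h2 h3
    simp [hyfulldef, hyabdef, h1, h2, h3]
  have hfacts : ∀ y0 ∈ A, ∀ ub ∈ B y0, ∀ ua ∈ Cset, ∀ w ∈ D y0 ub ua,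
      (∀ i, yfull y0 ub ua w i ∈ P i) ∧ (∀ i, yfull y0 ub ua w i ∉ S) := by
    intro y0 hy0 ub hub ua hua w hw
    have hB' := hBsub y0 ub hub
    have hC' := hCsub ua hua
    have hD' := hDsub y0 ub ua w hw
    constructor
    · intro i
      by_cases h1 : i = j
      · subst h1; rw [hyj]; exact hD'.1
      · by_cases h2 : i = a
        · subst h2; rw [hya]; exact hC'.1
        · by_cases h3 : i = b
          · subst h3; rw [hyb]; exact hB'.1
          · rw [hyfree _ _ _ _ _ h1 h2 h3]
            exact (mem_sdiff.mp ((hAmem y0 hy0).1 i ((hmemfree i).mpr ⟨h1, h2, h3⟩))).1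
    · intro i
      by_cases h1 : i = j
      · subst h1; rw [hyj]; exact hD'.2.1
      · by_cases h2 : i = a
        · subst h2; rw [hya]; exact hC'.2.1
        · by_cases h3 : i = b
          · subst h3; rw [hyb]; exact hB'.2.1
          · rw [hyfree _ _ _ _ _ h1 h2 h3]
            exact (mem_sdiff.mp ((hAmem y0 hy0).1 i ((hmemfree i).mpr ⟨h1, h2, h3⟩))).2
  -- the big sigma set
  set T := A.sigma (fun y0 => (B y0).sigma (fun ub => Cset.sigma (fun ua => D y0 ub ua)))
    with hTdef
  have hTmem : ∀ p : (_ : Fin k → α) × (_ : α) × (_ : α) × α, p ∈ T ↔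
      p.1 ∈ A ∧ p.2.1 ∈ B p.1 ∧ p.2.2.1 ∈ Cset ∧ p.2.2.2 ∈ D p.1 p.2.1 p.2.2.1 := by
    rintro ⟨y0, ub, ua, w⟩
    simp [hTdef, Finset.mem_sigma]
  set Φ : ((_ : Fin k → α) × (_ : α) × (_ : α) × α) → Finset α :=
    fun p => univ.image (yfull p.1 p.2.1 p.2.2.1 p.2.2.2) with hΦdef
  -- mapsTo
  have hmaps : ∀ p ∈ T, Φ p ∈ E.filter (fun e =>
      Disjoint e S ∧ ∃ r' : Fin k, r' ≠ j ∧ ∃ u ∈ S ∩ P j,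
        ((S \ {u}) \ P r' ∪ (e ∩ P r')) ∈ E ∧
        (((e \ P j) \ P r') ∪ {u} ∪ (S ∩ P r')) ∈ E) := by
    rintro ⟨y0, ub, ua, w⟩ hp
    obtain ⟨hy0, hub, hua, hw⟩ := (hTmem _).mp hp
    have hB' := hBsub y0 ub hub
    have hC' := hCsub ua hua
    have hD' := hDsub y0 ub ua w hw
    have hyP : ∀ i, yfull y0 ub ua w i ∈ P i := (hfacts y0 hy0 ub hub ua hua w hw).1
    have hyS : ∀ i, yfull y0 ub ua w i ∉ S := (hfacts y0 hy0 ub hub ua hua w hw).2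
    have hyPI : ∀ i ∈ (univ : Finset (Fin k)), yfull y0 ub ua w i ∈ P i := fun i _ => hyP i
    have hΦval : Φ ⟨y0, ub, ua, w⟩ = univ.image (yfull y0 ub ua w) := by
      simp only [hΦdef]
    rw [hΦval, Finset.mem_filter]
    have heE : univ.image (yfull y0 ub ua w) ∈ E := by
      have h1 : (univ : Finset (Fin k)) = insert j (univ.erase j) :=
        (Finset.insert_erase (mem_univ j)).symm
      rw [h1, Finset.image_insert, hyj]
      have h2 : (univ.erase j).image (yfull y0 ub ua w) =
          (univ.erase j).image (yab y0 ub ua) := by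
        apply Finset.image_congr
        intro i hi
        have hij : i ≠ j := (mem_erase.mp hi).1
        simp [hyfulldef, hij]
      rw [h2]
      exact hD'.2.2
    refine ⟨heE, ?_, a, haj, v, hvmem, ?_, ?_⟩
    · rw [Finset.disjoint_left]
      rintro u hu
      obtain ⟨i, -, rfl⟩ := mem_image.mp hu
      exact hyS i
    · have hinterA : univ.image (yfull y0 ub ua w) ∩ P a = {ua} := by
        rw [aux_inter7 hP hyPI (mem_univ a), hya]
      rw [hinterA, hSva, aux_union_singleton7]
      exact hC'.2.2
    · have hxa : S ∩ P a = {x a} := hxS a haj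
      rw [hxa, aux_sdiff7 hP hyPI j, aux_sdiff7 hP (fun i _ => hyP i) a]
      set Z : Fin k → α :=
        fun i => if i = j then v else if i = a then x a else if i = b then ub else y0 i
        with hZdef
      have hZj : Z j = v := by simp [hZdef]
      have hZa : Z a = x a := by simp [hZdef, haj]
      have hZb : Z b = ub := by simp [hZdef, hbj, Ne.symm hab]
      have hZ1 : (((univ.erase j).erase a).image (yfull y0 ub ua w)) ∪ {v} ∪ {x a} =
          univ.image Z := by
        have hgoal : (((univ.erase j).erase a).image (yfull y0 ub ua w)) =
            ((univ.erase j).erase a).image Z := by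
          apply Finset.image_congr
          intro i hi
          have hi' : i ∈ (univ.erase j).erase a := hi
          have h2 : i ≠ a := (mem_erase.mp hi').1
          have h1 : i ≠ j := (mem_erase.mp (mem_erase.mp hi').2).1
          by_cases h3 : i = b
          · subst h3; rw [hyb, hZb]
          · rw [hyfree _ _ _ _ _ h1 h2 h3]
            simp [hZdef, h1, h2, h3]
        have huniv : (univ : Finset (Fin k)) = insert a (insert j ((univ.erase j).erase a)) := by
          ext i
          constructor
          · intro _
            by_cases h1 : i = a
            · exact mem_insert.mpr (Or.inl h1)
            · refine mem_insert.mpr (Or.inr ?_)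
              by_cases h2 : i = j
              · exact mem_insert.mpr (Or.inl h2)
              · exact mem_insert.mpr (Or.inr (mem_erase.mpr ⟨h1, mem_erase.mpr ⟨h2, mem_univ i⟩⟩))
          · intro _; exact mem_univ i
        have himg : univ.image Z =
            insert (Z a) (insert (Z j) (((univ.erase j).erase a).image Z)) := by
          conv_lhs => rw [huniv]
          rw [Finset.image_insert, Finset.image_insert]
        rw [hgoal, aux_union_singleton7, aux_union_singleton7, himg, hZj, hZa]
      have hZ2 : univ.image Z = insert ub ((univ.erase b).image (zax y0)) := by
        conv_lhs => rw [show (univ : Finset (Fin k)) = insert b (univ.erase b) from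
          (Finset.insert_erase (mem_univ b)).symm]
        rw [Finset.image_insert, hZb]
        congr 1
        apply Finset.image_congr
        intro i hi
        have hi' : i ∈ univ.erase b := hi
        have hib : i ≠ b := (mem_erase.mp hi').1
        by_cases h1 : i = j
        · rw [show Z i = v from by simp [hZdef, h1],
            show zax y0 i = v from by simp [hzaxdef, h1]]
        · by_cases h2 : i = a
          · rw [show Z i = x a from by simp [hZdef, h1, h2, haj],
              show zax y0 i = x a from by simp [hzaxdef, h1, h2, haj]]
          · rw [show Z i = y0 i from by simp [hZdef, h1, h2, hib],
              show zax y0 i = y0 i from by simp [hzaxdef, h1, h2]]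
      rw [hZ1, hZ2]
      exact hB'.2.2
  -- injectivity
  have hinj : Set.InjOn Φ ↑T := by
    rintro ⟨y0, ub, ua, w⟩ hp ⟨y0', ub', ua', w'⟩ hp' heq
    obtain ⟨hy0, hub, hua, hw⟩ := (hTmem _).mp (Finset.mem_coe.mp hp)
    obtain ⟨hy0', hub', hua', hw'⟩ := (hTmem _).mp (Finset.mem_coe.mp hp')
    simp only [hΦdef] at heq
    have hyP := (hfacts y0 hy0 ub hub ua hua w hw).1
    have hyP' := (hfacts y0' hy0' ub' hub' ua' hua' w' hw').1
    have hcomp : ∀ i, yfull y0 ub ua w i = yfull y0' ub' ua' w' i := by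
      intro i
      have h1 : ({yfull y0 ub ua w i} : Finset α) = {yfull y0' ub' ua' w' i} := by
        rw [← aux_inter7 hP (fun l _ => hyP l) (mem_univ i),
          ← aux_inter7 hP (fun l _ => hyP' l) (mem_univ i), heq]
      exact Finset.singleton_injective h1
    have he1 : w = w' := by have h := hcomp j; rwa [hyj, hyj] at h
    have he2 : ua = ua' := by have h := hcomp a; rwa [hya, hya] at h
    have he3 : ub = ub' := by have h := hcomp b; rwa [hyb, hyb] at h
    have he4 : y0 = y0' := by
      funext i
      by_cases hi : i ∈ free
      · obtain ⟨h1, h2, h3⟩ := (hmemfree i).mp hi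
        have h := hcomp i
        rwa [hyfree _ _ _ _ _ h1 h2 h3, hyfree _ _ _ _ _ h1 h2 h3] at h
      · rw [(hAmem y0 hy0).2 i hi, (hAmem y0' hy0').2 i hi]
    subst he1; subst he2; subst he3; subst he4
    rfl
  -- counting
  have hstep : ∀ {β : Type} (sB : Finset β) (f : β → ℕ) (q : ℝ), 0 ≤ q →
      m ≤ (sB.card:ℝ) → (∀ z ∈ sB, q ≤ (f z : ℝ)) →
      m * q ≤ ((∑ z ∈ sB, f z : ℕ) : ℝ) := by
    intro β sB f q hq hs hf
    push_cast
    calc m * q ≤ (sB.card:ℝ) * q := mul_le_mul_of_nonneg_right hs hq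
      _ = sB.card • q := (nsmul_eq_mul _ _).symm
      _ ≤ ∑ z ∈ sB, (f z:ℝ) := Finset.card_nsmul_le_sum sB _ q hf
  have hTlow : (A.card : ℝ) * (m * (m * m)) ≤ (T.card : ℝ) := by
    rw [hTdef, Finset.card_sigma]
    have hout : ∀ y0 ∈ A, m*(m*m) ≤
        (((B y0).sigma (fun ub => Cset.sigma (fun ua => D y0 ub ua))).card : ℝ) := by
      intro y0 hy0
      rw [Finset.card_sigma]
      apply hstep (B y0) _ (m*m) (mul_nonneg hm0 hm0) (hB y0 hy0)
      intro ub hub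
      rw [Finset.card_sigma]
      apply hstep Cset _ m hm0 hC
      intro ua hua
      exact hD y0 hy0 ub hub ua hua
    push_cast
    calc (A.card:ℝ) * (m*(m*m)) = A.card • (m*(m*m)) := (nsmul_eq_mul _ _).symm
      _ ≤ ∑ y0 ∈ A, (((B y0).sigma (fun ub => Cset.sigma (fun ua => D y0 ub ua))).card : ℝ) :=
          Finset.card_nsmul_le_sum A _ _ hout
  -- finish
  calc c^3 * (n:ℝ)^k / 2 ≤ ((n:ℝ)-1)^(k-3) * (c*(n:ℝ) - ((k:ℝ)+1))^3 :=
        aux_arith7 k hk c hc0 hc1 n hnR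
    _ = (A.card : ℝ) * (m * (m * m)) := by
        rw [hAcard, Nat.cast_pow, Nat.cast_sub hn1, Nat.cast_one, hmdef]
        ring
    _ ≤ (T.card : ℝ) := hTlow
    _ ≤ _ := by
        exact_mod_cast Finset.card_le_card_of_injOn Φ hmaps hinj
end

section
/- In the extremal case proof (Claim 1 conclusion): under the hypotheses δ_{k-1}(H) ≥ n/k, 0 < γ ≪ ε, γ(1-1/k-γ)^{k-1} < ε², and n large, for each i ∈ [k] the set A_i := {x ∈ V_i - W_i : e_H(x, W) ≥ ((1-1/k-γ)^{k-1} - ε)n^{k-1}} satisfies |A_i| ≥ (1/k - ε)n. -/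
/-!
Every set `S ⊆ W` meeting each part other than `V_i` in exactly one vertex is a legal
`(k-1)`-set, so it has at least `n/k` neighbours, and all of them lie in `V_i - W` because `W`
is independent. There are at least `m^{k-1} ≥ ((1-1/k-γ)n)^{k-1}` such sets, where `m = |W_j|`,
so double counting gives `∑_{x ∈ V_i - W} e(x, W) ≥ m^{k-1} n/k`, while each single term is at
most the number of such sets. Since `|V_i - W| ≤ (1/k+γ)n`, too few vertices of large degree
would force `ε c^{k-1} < (γ+ε)(c^{k-1}-ε)` with `c = 1-1/k-γ`, contradicting `γ c^{k-1} < ε²`.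
-/

open Finset

section Partition

variable {α ι : Type*} [DecidableEq α] [Fintype ι] {P : ι → Finset α}

theorem card_eq_sum_card_inter_of_existsUnique (hP : ∀ v, ∃! j, v ∈ P j)
    (S : Finset α) : #S = ∑ j, #(S ∩ P j) := by
  rw [← card_biUnion]
  · congr 1
    ext v
    simpa using fun _ => (hP v).exists
  · intro j _ j' _ hjj'
    exact disjoint_left.mpr fun v hv hv' =>
      hjj' ((hP v).unique (mem_inter.mp hv).2 (mem_inter.mp hv').2)

variable [DecidableEq ι] {i : ι} {f : {j // j ≠ i} → α}

theorem univ_image_inter_of_ne (hP : ∀ v, ∃! j, v ∈ P j) (hf : ∀ j : {j // j ≠ i}, f j ∈ P j)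
    (j : {j // j ≠ i}) :
    univ.image f ∩ P j = {f j} := by
  ext v
  simp only [mem_inter, mem_image, mem_univ, true_and, mem_singleton]
  constructor
  · rintro ⟨⟨j', rfl⟩, hj'⟩
    rw [Subtype.ext ((hP _).unique (hf j') hj')]
  · rintro rfl
    exact ⟨⟨j, rfl⟩, hf j⟩

theorem univ_image_inter_eq_empty (hP : ∀ v, ∃! j, v ∈ P j) (hf : ∀ j : {j // j ≠ i}, f j ∈ P j) :
    univ.image f ∩ P i = ∅ := by
  ext v
  simp only [mem_inter, mem_image, mem_univ, true_and, notMem_empty, iff_false, not_and]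
  rintro ⟨j, rfl⟩ hi
  exact j.2 ((hP _).unique (hf j) hi)

end Partition

section Hypergraph

variable {α ι : Type*} [DecidableEq α] [Fintype ι] [DecidableEq ι]
  {P : ι → Finset α} {E : Finset (Finset α)} {W : Finset α} {i : ι}

/-- The candidates for `e \ {x}`, where `x ∈ P i` and `e` is an edge with `e \ {x} ⊆ W`. -/
def crossSets (P : ι → Finset α) (W : Finset α) (i : ι) : Finset (Finset α) :=
  W.powerset.filter fun S => S ∩ P i = ∅ ∧ ∀ j ≠ i, #(S ∩ P j) = 1

/-- `linkEdges E W x` are the edges containing `x` whose other vertices lie in `W`, so that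
`#(linkEdges E W x)` is the paper's `e_H(x, W)`. -/
def linkEdges (E : Finset (Finset α)) (W : Finset α) (x : α) : Finset (Finset α) :=
  E.filter fun e => x ∈ e ∧ e \ {x} ⊆ W

theorem mem_crossSets {S : Finset α} :
    S ∈ crossSets P W i ↔ S ⊆ W ∧ S ∩ P i = ∅ ∧ ∀ j ≠ i, #(S ∩ P j) = 1 := by
  simp [crossSets]

theorem card_of_mem_crossSets (hP : ∀ v, ∃! j, v ∈ P j) {S : Finset α}
    (hS : S ∈ crossSets P W i) : #S = Fintype.card ι - 1 := by
  obtain ⟨-, hSi, hSj⟩ := mem_crossSets.mp hS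
  rw [card_eq_sum_card_inter_of_existsUnique hP, ← add_sum_erase _ _ (mem_univ i), hSi,
    card_empty, zero_add, sum_congr rfl fun j hj => hSj j (ne_of_mem_erase hj), sum_const,
    card_erase_of_mem (mem_univ i), card_univ, smul_eq_mul, mul_one]

theorem card_inter_le_one_of_mem_crossSets {S : Finset α} (hS : S ∈ crossSets P W i) (j : ι) :
    #(S ∩ P j) ≤ 1 := by
  obtain ⟨-, hSi, hSj⟩ := mem_crossSets.mp hS
  rcases eq_or_ne j i with rfl | hj
  · simp [hSi]
  · exact (hSj j hj).le

theorem prod_card_le_card_crossSets (hP : ∀ v, ∃! j, v ∈ P j) :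
    ∏ j : {j // j ≠ i}, #(W ∩ P j) ≤ #(crossSets P W i) := by
  rw [← Fintype.card_piFinset]
  refine card_le_card_of_injOn (fun f => univ.image f) (fun f hf => ?_) fun f hf g hg hfg => ?_
  · simp only [mem_coe, Fintype.mem_piFinset, mem_inter] at hf
    refine mem_crossSets.mpr ⟨?_, univ_image_inter_eq_empty hP fun j => (hf j).2,
      fun j hj => ?_⟩
    · simpa [image_subset_iff] using fun j hj => (hf ⟨j, hj⟩).1
    · rw [univ_image_inter_of_ne hP (fun j => (hf j).2) ⟨j, hj⟩, card_singleton]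
  · simp only [mem_coe, Fintype.mem_piFinset, mem_inter] at hf hg
    funext j
    have hgj := univ_image_inter_of_ne hP (fun j => (hg j).2) j
    rwa [← show univ.image f = univ.image g from hfg,
      univ_image_inter_of_ne hP (fun j => (hf j).2) j, singleton_inj] at hgj

theorem erase_mem_crossSets (hP : ∀ v, ∃! j, v ∈ P j) (hE : ∀ e ∈ E, ∀ j, #(e ∩ P j) = 1)
    {x : α} (hx : x ∈ P i) {e : Finset α} (he : e ∈ linkEdges E W x) :
    e.erase x ∈ crossSets P W i := by
  obtain ⟨heE, hxe, heW⟩ := mem_filter.mp he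
  refine mem_crossSets.mpr ⟨by rwa [← sdiff_singleton_eq_erase], ?_, fun j hj => ?_⟩
  · obtain ⟨y, hy⟩ := card_eq_one.mp (hE e heE i)
    have hxy : x = y := mem_singleton.mp (hy ▸ mem_inter_of_mem hxe hx)
    rw [erase_inter, hy, hxy, erase_singleton]
  · have hxj : x ∉ P j := fun hxj => hj ((hP x).unique hxj hx)
    rw [erase_inter, erase_eq_of_notMem fun h => hxj (mem_inter.mp h).2, hE e heE j]

theorem card_linkEdges_le_card_crossSets (hP : ∀ v, ∃! j, v ∈ P j)
    (hE : ∀ e ∈ E, ∀ j, #(e ∩ P j) = 1) {x : α} (hx : x ∈ P i) :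
    #(linkEdges E W x) ≤ #(crossSets P W i) :=
  card_le_card_of_injOn (fun e => e.erase x) (fun e he => erase_mem_crossSets hP hE hx he)
    fun e he e' he' hee' => by
      rw [← insert_erase (mem_filter.mp he).2.1, ← insert_erase (mem_filter.mp he').2.1]
      exact congrArg (insert x) hee'

theorem mem_sdiff_of_insert_mem (hE : ∀ e ∈ E, ∀ j, #(e ∩ P j) = 1) (hW : ∀ e ∈ E, ¬e ⊆ W)
    {S : Finset α} (hS : S ∈ crossSets P W i) {v : α} (hv : insert v S ∈ E) : v ∈ P i \ W := by
  obtain ⟨hSW, hSi, -⟩ := mem_crossSets.mp hS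
  refine mem_sdiff.mpr ⟨?_, fun hvW => hW _ hv (insert_subset hvW hSW)⟩
  obtain ⟨y, hy⟩ := card_pos.mp ((hE _ hv i).symm ▸ Nat.one_pos)
  obtain ⟨hyv, hyi⟩ := mem_inter.mp hy
  rcases mem_insert.mp hyv with rfl | hyS
  · exact hyi
  · simpa [hSi] using mem_inter_of_mem hyS hyi

variable [Fintype α]

theorem sum_card_le_sum_card_linkEdges (hE : ∀ e ∈ E, ∀ j, #(e ∩ P j) = 1)
    (hW : ∀ e ∈ E, ¬e ⊆ W) :
    ∑ S ∈ crossSets P W i, #{v | insert v S ∈ E} ≤ ∑ x ∈ P i \ W, #(linkEdges E W x) := by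
  calc ∑ S ∈ crossSets P W i, #{v | insert v S ∈ E}
      ≤ ∑ S ∈ crossSets P W i, #((P i \ W).bipartiteAbove (fun S v => insert v S ∈ E) S) :=
        sum_le_sum fun S hS => card_le_card fun v hv =>
          mem_filter.mpr ⟨mem_sdiff_of_insert_mem hE hW hS (mem_filter.mp hv).2,
            (mem_filter.mp hv).2⟩
    _ = ∑ x ∈ P i \ W, #((crossSets P W i).bipartiteBelow (fun S v => insert v S ∈ E) x) :=
        sum_card_bipartiteAbove_eq_sum_card_bipartiteBelow _
    _ ≤ ∑ x ∈ P i \ W, #(linkEdges E W x) := sum_le_sum fun x hx => by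
        have hxW : x ∉ W := (mem_sdiff.mp hx).2
        refine card_le_card_of_injOn (insert x) (fun S hS => ?_) fun S hS S' hS' hSS' => ?_
        · obtain ⟨hS, hxS⟩ := (mem_bipartiteBelow _).mp hS
          exact mem_filter.mpr ⟨hxS, mem_insert_self x S,
            sdiff_singleton_eq_erase x _ ▸ (erase_insert_subset x S).trans (mem_crossSets.mp hS).1⟩
        · have hxS : ∀ {S}, S ∈ crossSets P W i → x ∉ S := fun hS hxS =>
            hxW ((mem_crossSets.mp hS).1 hxS)
          rw [← erase_insert (hxS ((mem_bipartiteBelow _).mp hS).1),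
            ← erase_insert (hxS ((mem_bipartiteBelow _).mp hS').1)]
          exact congrArg (·.erase x) hSS'

theorem card_crossSets_mul_le_sum_card_linkEdges (hP : ∀ v, ∃! j, v ∈ P j)
    (hE : ∀ e ∈ E, ∀ j, #(e ∩ P j) = 1) (hW : ∀ e ∈ E, ¬e ⊆ W) {δ : ℝ}
    (hδ : ∀ S : Finset α, #S = Fintype.card ι - 1 → (∀ j, #(S ∩ P j) ≤ 1) →
      δ ≤ #{v | insert v S ∈ E}) :
    #(crossSets P W i) * δ ≤ ∑ x ∈ P i \ W, (#(linkEdges E W x) : ℝ) := by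
  calc #(crossSets P W i) * δ
      ≤ ∑ S ∈ crossSets P W i, (#{v | insert v S ∈ E} : ℝ) := by
        rw [← nsmul_eq_mul]
        exact card_nsmul_le_sum _ _ _ fun S hS =>
          hδ S (card_of_mem_crossSets hP hS) (card_inter_le_one_of_mem_crossSets hS)
    _ ≤ _ := by exact_mod_cast sum_card_le_sum_card_linkEdges hE hW

end Hypergraph

theorem sum_le_card_filter_mul_add_mul {β : Type*} (s : Finset β) (g : β → ℝ) {M : ℝ}
    (hM : ∀ x ∈ s, g x ≤ M) (t : ℝ) :
    ∑ x ∈ s, g x ≤ #{x ∈ s | t ≤ g x} * M + (#s - #{x ∈ s | t ≤ g x}) * t := by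
  have hcard : (#s : ℝ) - #{x ∈ s | t ≤ g x} = #{x ∈ s | ¬t ≤ g x} := by
    rw [← card_filter_add_card_filter_not (s := s) (fun x => t ≤ g x)]
    push_cast
    ring
  rw [← sum_filter_add_sum_filter_not s (fun x => t ≤ g x), hcard, ← nsmul_eq_mul,
    ← nsmul_eq_mul]
  gcongr
  · exact sum_le_card_nsmul _ _ _ fun x hx => hM x (mem_filter.mp hx).1
  · exact sum_le_card_nsmul _ _ _ fun x hx => (not_le.mp (mem_filter.mp hx).2).le

theorem le_of_mul_le_mul_add_sub_mul {ρ γ ε C n N a M P : ℝ} (hγ : 0 ≤ γ) (hε : 0 < ε)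
    (hC : 0 < C) (hγC : γ * C < ε ^ 2) (hn : 0 < n) (hP : 0 < P) (hM : C * P ≤ M)
    (hN : N ≤ (ρ + γ) * n) (ha : a ≤ N)
    (h : M * (ρ * n) ≤ a * M + (N - a) * ((C - ε) * P)) :
    (ρ - ε) * n ≤ a := by
  by_contra! ha'
  rcases le_or_gt C ε with hCε | hCε
  · have hMpos : 0 < M := (mul_pos hC hP).trans_le hM
    have : ρ * n ≤ a := le_of_mul_le_mul_left (a := M) (by
      nlinarith [mul_nonpos_of_nonneg_of_nonpos (sub_nonneg.mpr ha)
        (mul_nonpos_of_nonpos_of_nonneg (sub_nonpos.mpr hCε) hP.le)]) hMpos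
    nlinarith [mul_pos hε hn]
  · set t := (C - ε) * P
    have ht : 0 < t := mul_pos (sub_pos.mpr hCε) hP
    have hMt : 0 < M - t := by nlinarith
    have h₁ : ε * n * M < (N - (ρ - ε) * n) * t := by nlinarith [mul_lt_mul_of_pos_right ha' hMt]
    have h₂ : ε * M < (γ + ε) * t := by
      refine lt_of_mul_lt_mul_left ?_ hn.le
      nlinarith [mul_le_mul_of_nonneg_right (show N - (ρ - ε) * n ≤ (γ + ε) * n by linarith) ht.le]
    have h₃ : ε * C < (γ + ε) * (C - ε) := by
      refine lt_of_mul_lt_mul_right ?_ hP.le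
      nlinarith [mul_le_mul_of_nonneg_left hM hε.le]
    nlinarith [mul_nonneg hγ hε.le]

/-- Claim 1 conclusion: under δ_{k-1}(H) ≥ n/k, 0 < γ ≪ ε,
γ(1-1/k-γ)^{k-1} < ε² and n large, each set
A_i = {x ∈ V_i - W_i : e_H(x,W) ≥ ((1-1/k-γ)^{k-1} - ε)n^{k-1}}
has |A_i| ≥ (1/k - ε)n. -/
theorem stmt14 (k : ℕ) (hk : 3 ≤ k) (γ ε : ℝ) (hγ0 : 0 < γ) (hγε : γ < ε)
    (h1 : γ * (1 - 1 / (k : ℝ) - γ)^(k - 1) < ε^2) :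
    ∃ n0 : ℕ, ∀ n : ℕ, n0 ≤ n →
    ∀ (α : Type) [Fintype α] [DecidableEq α],
    ∀ P : Fin k → Finset α,
    (∀ v : α, ∃! i, v ∈ P i) →
    (∀ i, (P i).card = n) →
    ∀ E : Finset (Finset α),
    (∀ e ∈ E, ∀ i, (e ∩ P i).card = 1) →
    (∀ S : Finset α, S.card = k - 1 → (∀ i, (S ∩ P i).card ≤ 1) →
      (n : ℝ) / k ≤ ((Finset.univ.filter (fun v => insert v S ∈ E)).card : ℝ)) →
    ∀ W : Finset α, (∀ e ∈ E, ¬ e ⊆ W) →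
    (∀ i, (W ∩ P i).card = ⌈(1 - 1 / (k : ℝ) - γ) * n⌉₊) →
    ∀ i : Fin k,
      (1 / (k : ℝ) - ε) * n ≤
        ((((P i) \ W).filter (fun x =>
          ((1 - 1 / (k : ℝ) - γ)^(k - 1) - ε) * (n : ℝ)^(k - 1) ≤
            ((E.filter (fun e => x ∈ e ∧ e \ {x} ⊆ W)).card : ℝ))).card : ℝ) := by
  refine ⟨1, fun n hn α _ _ P hP hPcard E hE hδ W hW hWcard i => ?_⟩
  rcases le_or_gt (1 / (k : ℝ)) ε with hεk | hεk
  · exact (mul_nonpos_of_nonpos_of_nonneg (by linarith) n.cast_nonneg).trans (Nat.cast_nonneg _)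
  set c := 1 - 1 / (k : ℝ) - γ
  have hc : 0 < c := by
    have : 1 / (k : ℝ) ≤ 1 / 3 := one_div_le_one_div_of_le (by norm_num) (by exact_mod_cast hk)
    linarith
  have hn₀ : (0 : ℝ) < n := by exact_mod_cast hn
  have hM : (c * n) ^ (k - 1) ≤ #(crossSets P W i) := calc
    (c * n) ^ (k - 1) ≤ (⌈c * n⌉₊ : ℝ) ^ (k - 1) := by gcongr; exact Nat.le_ceil _
    _ = ∏ j : {j // j ≠ i}, #(W ∩ P j) := by simp [hWcard]
    _ ≤ #(crossSets P W i) := by exact_mod_cast prod_card_le_card_crossSets hP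
  have hsum : #(crossSets P W i) * ((1 / k) * n) ≤ ∑ x ∈ P i \ W, (#(linkEdges E W x) : ℝ) := by
    rw [one_div_mul_eq_div]
    exact card_crossSets_mul_le_sum_card_linkEdges hP hE hW (by simpa using hδ)
  have hN : (#(P i \ W) : ℝ) ≤ (1 / k + γ) * n := by
    have hsplit : (#(P i \ W) : ℝ) + ⌈c * n⌉₊ = n := by
      rw [← hWcard i, inter_comm W]
      exact_mod_cast (card_sdiff_add_card_inter _ _).trans (hPcard i)
    have : (1 / k + γ) * n = n - c * n := by ring
    linarith [Nat.le_ceil (c * n)]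
  have hlink : ∀ x ∈ P i \ W, (#(linkEdges E W x) : ℝ) ≤ #(crossSets P W i) := fun x hx => by
    exact_mod_cast card_linkEdges_le_card_crossSets hP hE (mem_sdiff.mp hx).1
  exact le_of_mul_le_mul_add_sub_mul hγ0.le (hγ0.trans hγε) (by positivity) h1 hn₀
    (by positivity) (by rwa [mul_pow] at hM) hN (by exact_mod_cast card_filter_le _ _)
    (hsum.trans (sum_le_card_filter_mul_add_mul _ _ hlink _))
end

section
/- Final absorption step: let H be a k-partite k-graph with classes of size n, M' a matching such that for every type-1 set S at least t > k² edges of M' are S-absorbing, and M ⊇ M' a matching with |V(H) - V(M)| ∩ V_1 of size u where 2 ≤ u ≤ k². Then H contains a matching of size |M| + u - 1, i.e., leaving at most one uncovered vertex per class. -/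
/-!
Start from `M` and absorb one uncovered vertex of `V_1` at a time. While a matching `N ⊇ M`
leaves at least two vertices of `V_1` uncovered, it leaves equally many uncovered in every class,
so some type-1 set `S` avoids `N`. Replacing an `S`-absorbing edge `e ∈ N` by the two edges
`S_e, e_S` enlarges `N` by one, and removes from `N` only the edge `e` of `M'`. After `j` steps at
most `j < u ≤ k² < t` edges of `M'` have left `N`, so one of the at least `t` `S`-absorbing edges
of `M'` is still in `N`.
-/

section

open Finset Function

theorem pairwise_disjoint_of_existsUnique_mem {α : Type*} {k : ℕ} {P : Fin k → Finset α}
    (hP : ∀ v, ∃! i, v ∈ P i) : Pairwise (Disjoint on P) := fun _ _ hij =>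
  disjoint_left.2 fun v hi hj => hij ((hP v).unique hi hj)

variable {α : Type*} [DecidableEq α]

theorem Finset.card_sdiff_biUnion_add_card {s : Finset α} {N : Finset (Finset α)}
    (hN : (N : Set (Finset α)).PairwiseDisjoint id) (hs : ∀ e ∈ N, (e ∩ s).card = 1) :
    (s \ N.biUnion id).card + N.card = s.card := by
  have hcover : (s ∩ N.biUnion id).card = N.card := by
    rw [inter_biUnion, card_biUnion (hN.mono fun e => inter_subset_right)]
    simpa [inter_comm s] using sum_congr rfl hs
  rw [← hcover, add_comm, card_inter_add_card_sdiff]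

theorem Finset.card_insert_insert_erase {β : Type*} [DecidableEq β] {N : Finset β} {a b c : β}
    (hc : c ∈ N) (ha : a ∉ N) (hb : b ∉ N) (hab : a ≠ b) :
    (insert a (insert b (N.erase c))).card = N.card + 1 := by
  rw [card_insert_of_notMem (by simp [hab, ha]),
    card_insert_of_notMem fun h => hb (mem_of_mem_erase h), card_erase_add_one hc]

theorem Finset.pairwiseDisjoint_insert_insert_erase {N : Finset (Finset α)}
    (hN : (N : Set (Finset α)).PairwiseDisjoint id) {S e A B : Finset α} (he : e ∈ N)
    (hSN : Disjoint S (N.biUnion id)) (hAB : Disjoint A B) (hA : A ⊆ S ∪ e)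
    (hB : B ⊆ S ∪ e) :
    ((insert A (insert B (N.erase e)) : Finset (Finset α)) : Set (Finset α)).PairwiseDisjoint id := by
  have hrest : ∀ {C}, C ⊆ S ∪ e → ∀ f ∈ (N.erase e : Set (Finset α)), Disjoint C f := by
    intro C hC f hf
    obtain ⟨hfe, hfN⟩ := mem_erase.1 hf
    refine disjoint_of_subset_left hC (disjoint_union_left.2 ⟨?_, (hN hfN he hfe).symm⟩)
    exact disjoint_of_subset_right (subset_biUnion_of_mem id hfN) hSN
  simp only [coe_insert]
  refine ((hN.subset (coe_subset.2 (erase_subset e N))).insert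
    fun f hf _ => hrest hB f hf).insert fun f hf _ => ?_
  obtain rfl | hf := hf
  · exact hAB
  · exact hrest hA f hf

theorem Finset.exists_mem_mem_of_card_sdiff_lt {β : Type*} [DecidableEq β] {s u : Finset β}
    {p : β → Prop} [DecidablePred p] {m : ℕ} (hm : m ≤ (s.filter p).card)
    (hsu : (s \ u).card < m) : ∃ x ∈ s, x ∈ u ∧ p x := by
  by_contra! hcon
  have hsub : s.filter p ⊆ s \ u := fun x hx => by
    obtain ⟨hxs, hpx⟩ := mem_filter.1 hx
    exact mem_sdiff.2 ⟨hxs, fun hxu => hcon x hxs hxu hpx⟩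
  have := card_le_card hsub
  omega

section Partite

variable {k : ℕ} (P : Fin k → Finset α) (E : Finset (Finset α)) (z : Fin k)

def IsTypeOne (S : Finset α) : Prop :=
  (S ∩ P z).card = 2 ∧ ∀ i, i ≠ z → (S ∩ P i).card = 1

def IsAbsorbing (S e : Finset α) : Prop :=
  Disjoint e S ∧ ∃ r, r ≠ z ∧ ∃ v ∈ S ∩ P z,
    (S \ {v}) \ P r ∪ (e ∩ P r) ∈ E ∧ ((e \ P z) \ P r) ∪ {v} ∪ (S ∩ P r) ∈ E

variable {P E z}

theorem exists_isTypeOne_disjoint (hP : Pairwise (Disjoint on P)) {U : Finset α}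
    (hz : 2 ≤ (P z \ U).card) (hU : ∀ i, i ≠ z → 1 ≤ (P i \ U).card) :
    ∃ S, IsTypeOne P z S ∧ Disjoint S U := by
  have hT : ∀ i, ∃ T ⊆ P i \ U, T.card = if i = z then 2 else 1 := fun i =>
    exists_subset_card_eq (by split_ifs with h; exacts [h ▸ hz, hU i h])
  choose T hTsub hTcard using hT
  have hTP : ∀ i, univ.biUnion T ∩ P i = T i := by
    intro i
    ext x
    simp only [mem_inter, mem_biUnion, mem_univ, true_and]
    refine ⟨fun ⟨⟨j, hxj⟩, hxi⟩ => ?_, fun hx => ⟨⟨i, hx⟩, (mem_sdiff.1 (hTsub i hx)).1⟩⟩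
    obtain rfl | hji := eq_or_ne j i
    · exact hxj
    · exact absurd hxi (disjoint_left.1 (hP hji) (mem_sdiff.1 (hTsub j hxj)).1)
  refine ⟨univ.biUnion T, ⟨?_, fun i hi => ?_⟩, ?_⟩
  · simpa [hTP] using hTcard z
  · simpa [hTP, hi] using hTcard i
  · exact (disjoint_biUnion_left _ _ _).2 fun i _ =>
      disjoint_of_subset_left (hTsub i) sdiff_disjoint

theorem exists_matching_absorb (hP : Pairwise (Disjoint on P)) {N : Finset (Finset α)}
    (hNE : N ⊆ E) (hN : (N : Set (Finset α)).PairwiseDisjoint id) {S e : Finset α}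
    (hS : IsTypeOne P z S) (hSN : Disjoint S (N.biUnion id)) (he : e ∈ N)
    (habs : IsAbsorbing P E z S e) :
    ∃ N' ⊆ E, (N' : Set (Finset α)).PairwiseDisjoint id ∧ N'.card = N.card + 1 ∧
      N.erase e ⊆ N' := by
  obtain ⟨heS, r, hrz, v, hv, hA, hB⟩ := habs
  obtain ⟨w, hw, hwv⟩ := exists_mem_ne (s := S ∩ P z) (by rw [hS.1]; norm_num) v
  have hwr : w ∉ P r := fun h => disjoint_left.1 (hP hrz) h (mem_inter.1 hw).2
  set A := (S \ {v}) \ P r ∪ (e ∩ P r)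
  set B := ((e \ P z) \ P r) ∪ {v} ∪ (S ∩ P r)
  have hAB : Disjoint A B := by grind [disjoint_left]
  have hwA : w ∈ A := by grind
  have hvB : v ∈ B := by grind
  have hnotMem : ∀ {C x}, x ∈ C → x ∈ S → C ∉ N := fun hxC hxS hC =>
    disjoint_left.1 hSN hxS (mem_biUnion.2 ⟨_, hC, hxC⟩)
  refine ⟨insert A (insert B (N.erase e)), ?_, ?_, ?_,
    (subset_insert _ _).trans (subset_insert _ _)⟩
  · simp only [insert_subset_iff]
    exact ⟨hA, hB, (erase_subset e N).trans hNE⟩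
  · exact pairwiseDisjoint_insert_insert_erase hN he hSN hAB (by grind) (by grind)
  · exact card_insert_insert_erase he (hnotMem hwA (mem_inter.1 hw).1)
      (hnotMem hvB (mem_inter.1 hv).1) fun h => disjoint_left.1 hAB hwA (h ▸ hwA)

open Classical in
theorem exists_matching_card_add_of_absorbing (hP : Pairwise (Disjoint on P)) {n : ℕ}
    (hPcard : ∀ i, (P i).card = n) (hE : ∀ e ∈ E, ∀ i, (e ∩ P i).card = 1)
    {M' M : Finset (Finset α)} (hM'M : M' ⊆ M) (hME : M ⊆ E)
    (hM : (M : Set (Finset α)).PairwiseDisjoint id) {t : ℕ}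
    (ht : (P z \ M.biUnion id).card ≤ t)
    (habs : ∀ S, IsTypeOne P z S → t ≤ (M'.filter (IsAbsorbing P E z S)).card) :
    ∀ j < (P z \ M.biUnion id).card, ∃ N ⊆ E, (N : Set (Finset α)).PairwiseDisjoint id ∧
      N.card = M.card + j ∧ (M' \ N).card ≤ j := by
  have hcount : ∀ N ⊆ E, (N : Set (Finset α)).PairwiseDisjoint id →
      ∀ i, (P i \ N.biUnion id).card + N.card = n := fun N hNE hN i =>
    hPcard i ▸ card_sdiff_biUnion_add_card hN fun e he => hE e (hNE he) i
  intro j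
  induction j with
  | zero => exact fun _ => ⟨M, hME, hM, rfl, by simp [sdiff_eq_empty_iff_subset.2 hM'M]⟩
  | succ j ih =>
    intro hj
    obtain ⟨N, hNE, hN, hNcard, hM'N⟩ := ih (by omega)
    have huncovered : ∀ i, (P i \ N.biUnion id).card + j = (P z \ M.biUnion id).card := by
      intro i
      have := hcount N hNE hN i
      have := hcount M hME hM z
      omega
    obtain ⟨S, hS, hSN⟩ := exists_isTypeOne_disjoint hP (z := z) (U := N.biUnion id)
      (by have := huncovered z; omega) fun i _ => by have := huncovered i; omega
    obtain ⟨e, heM', heN, he⟩ :=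
      exists_mem_mem_of_card_sdiff_lt (habs S hS) (u := N) (by omega)
    obtain ⟨N', hN'E, hN', hN'card, hNN'⟩ := exists_matching_absorb hP hNE hN hS hSN heN he
    refine ⟨N', hN'E, hN', by omega, ?_⟩
    calc (M' \ N').card ≤ (insert e (M' \ N)).card := card_le_card fun f hf => by grind
      _ ≤ j + 1 := (card_insert_le _ _).trans (by omega)

end Partite

end

/-- final absorption step: if M' is a matching such that every type-1
set S has at least t > k² S-absorbing edges in M', and M ⊇ M' is a matching leaving
u uncovered vertices in V_1 with 2 ≤ u ≤ k², then H has a matching of size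
|M| + u - 1 (leaving at most one uncovered vertex per class). -/
theorem stmt18 {α : Type*} [Fintype α] [DecidableEq α]
    (k n : ℕ) (hk : 3 ≤ k)
    (P : Fin k → Finset α)
    (hP : ∀ v : α, ∃! i, v ∈ P i)
    (hPcard : ∀ i, (P i).card = n)
    (E : Finset (Finset α))
    (hE : ∀ e ∈ E, ∀ i, (e ∩ P i).card = 1)
    (M' M : Finset (Finset α)) (hM'M : M' ⊆ M) (hME : M ⊆ E)
    (hMd : ∀ a ∈ M, ∀ b ∈ M, a ≠ b → Disjoint a b)
    (t : ℕ) (ht : k^2 < t)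
    (habs : ∀ S : Finset α,
      (S ∩ P ⟨0, by omega⟩).card = 2 →
      (∀ i, i ≠ (⟨0, by omega⟩ : Fin k) → (S ∩ P i).card = 1) →
      t ≤ (M'.filter (fun e =>
        Disjoint e S ∧ ∃ r : Fin k, r ≠ (⟨0, by omega⟩ : Fin k) ∧
          ∃ v ∈ S ∩ P ⟨0, by omega⟩,
            ((S \ {v}) \ P r ∪ (e ∩ P r)) ∈ E ∧
            (((e \ P ⟨0, by omega⟩) \ P r) ∪ {v} ∪ (S ∩ P r)) ∈ E)).card)
    (u : ℕ) (hu : u = (P ⟨0, by omega⟩ \ M.biUnion id).card)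
    (hu2 : 2 ≤ u) (hu3 : u ≤ k^2) :
    ∃ N ⊆ E, (∀ a ∈ N, ∀ b ∈ N, a ≠ b → Disjoint a b) ∧ N.card = M.card + u - 1 := by
  obtain ⟨N, hNE, hN, hNcard, -⟩ :=
    exists_matching_card_add_of_absorbing (z := ⟨0, by omega⟩)
      (pairwise_disjoint_of_existsUnique_mem hP) hPcard hE hM'M hME hMd
      (t := t) (by omega) (fun S hS => (habs S hS.1 hS.2).trans_eq (by congr)) (u - 1)
      (by omega)
  exact ⟨N, hNE, hN, by omega⟩
end
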